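/- arXiv:1509.00569 — 7 statements merged into one kernel-verified Lean document; each statement's English description precedes it below -/
import Mathlib

section
/- Let d, k, s be integers with d ≥ (s+k)/2 + 1 and d ≥ k+1. Let G' = (S, U) be a bipartite graph with |S| = s and |U| = s+1. Suppose every vertex of U has degree at least d in G', every vertex of S has degree at most d+2, and at most one vertex of S has degree exactly d+2. Then for any subset S' ⊆ S with |S'| = k and any subset U' ⊆ U with |U'| = k+1, the graph G' − S' − U' has a perfect matching. -/
set_option maxHeartbeats 1000000


/-- Lemma 3.1: bipartite graph `G'` with parts `S` (order `s`) and `U` (order `s+1`),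
degree conditions as in the paper; removing any `S' ⊆ S` of size `k` and `U' ⊆ U` of size
`k+1` leaves a graph with a perfect matching. -/
theorem stmt0 {V : Type*} [Fintype V] [DecidableEq V]
    (G : SimpleGraph V) [DecidableRel G.Adj]
    (S U : Finset V) (d k s : ℕ)
    (hdisj : Disjoint S U) (hcover : S ∪ U = Finset.univ)
    (hbip : ∀ v w, G.Adj v w → (v ∈ S ↔ w ∈ U))
    (hS : S.card = s) (hU : U.card = s + 1)
    (hd1 : ((s : ℝ) + k) / 2 + 1 ≤ d) (hd2 : k + 1 ≤ d)
    (hUdeg : ∀ u ∈ U, d ≤ G.degree u)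
    (hSdeg : ∀ v ∈ S, G.degree v ≤ d + 2)
    (hSone : (S.filter fun v => G.degree v = d + 2).card ≤ 1)
    (S' U' : Finset V) (hS' : S' ⊆ S) (hU' : U' ⊆ U)
    (hS'card : S'.card = k) (hU'card : U'.card = k + 1) :
    ∃ M : SimpleGraph.Subgraph (G.induce {v : V | v ∉ S' ∪ U'}),
      M.IsPerfectMatching := by
  have hd1' : s + k + 2 ≤ 2 * d := by
    have : ((s : ℝ) + k + 2) ≤ 2 * d := by linarith
    exact_mod_cast this
  -- neighbors of U-vertices lie in S; neighbors of S-vertices lie in U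
  have hnbrU : ∀ u ∈ U, ∀ w, G.Adj u w → w ∈ S := by
    intro u hu w hadj
    have h1 := hbip u w hadj
    have hwU : w ∉ U := fun hw =>
      (Finset.disjoint_left.mp hdisj (h1.mpr hw)) hu
    rcases Finset.mem_union.mp (hcover ▸ Finset.mem_univ w) with h | h
    · exact h
    · exact absurd h hwU
  have hnbrS : ∀ v ∈ S, ∀ w, G.Adj v w → w ∈ U := fun v hv w hadj => (hbip v w hadj).mp hv
  have hks : k ≤ s := by
    have := Finset.card_le_card hU'
    omega
  have hUU'card : (U \ U').card = s - k := by
    rw [Finset.card_sdiff_of_subset hU', hU, hU'card]; omega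
  have hSS'card : (S \ S').card = s - k := by
    rw [Finset.card_sdiff_of_subset hS', hS, hS'card]
  -- the index type for Hall's theorem
  set ι := {u : V // u ∈ U \ U'} with hι
  set t : ι → Finset V := fun u => G.neighborFinset u.1 \ S' with ht
  have htS : ∀ u : ι, t u ⊆ S \ S' := by
    intro u w hw
    rw [Finset.mem_sdiff] at hw ⊢
    refine ⟨hnbrU u.1 (Finset.mem_sdiff.mp u.2).1 w ?_, hw.2⟩
    exact (SimpleGraph.mem_neighborFinset _ _ _).mp hw.1
  -- double counting: sum of degrees over S equals sum over U
  have hdegS : ∀ v ∈ S, G.degree v = (U.filter (G.Adj v)).card := by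
    intro v hv
    rw [← SimpleGraph.card_neighborFinset_eq_degree]
    congr 1
    ext w
    simp only [SimpleGraph.mem_neighborFinset, Finset.mem_filter]
    exact ⟨fun h => ⟨hnbrS v hv w h, h⟩, fun h => h.2⟩
  have hdegU : ∀ u ∈ U, G.degree u = (S.filter (G.Adj u)).card := by
    intro u hu
    rw [← SimpleGraph.card_neighborFinset_eq_degree]
    congr 1
    ext w
    simp only [SimpleGraph.mem_neighborFinset, Finset.mem_filter]
    exact ⟨fun h => ⟨hnbrU u hu w h, h⟩, fun h => h.2⟩
  have hdouble : ∑ v ∈ S, G.degree v = ∑ u ∈ U, G.degree u := by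
    calc ∑ v ∈ S, G.degree v = ∑ v ∈ S, ∑ u ∈ U, (if G.Adj v u then 1 else 0) := by
          refine Finset.sum_congr rfl fun v hv => ?_
          rw [hdegS v hv, Finset.sum_boole]
          simp
      _ = ∑ u ∈ U, ∑ v ∈ S, (if G.Adj v u then 1 else 0) := Finset.sum_comm
      _ = ∑ u ∈ U, G.degree u := by
          refine Finset.sum_congr rfl fun u hu => ?_
          rw [hdegU u hu, Finset.sum_boole]
          simp only [Nat.cast_id]
          congr 1
          apply Finset.filter_congr
          intro v _
          rw [G.adj_comm]
  -- Hall's condition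
  have hall : ∀ A : Finset ι, A.card ≤ (A.biUnion t).card := by
    intro A
    by_contra hlt
    push_neg at hlt
    set N := A.biUnion t with hN
    set a := A.card with ha
    set n := N.card with hn
    have hA0 : 0 < a := lt_of_le_of_lt (Nat.zero_le _) hlt
    obtain ⟨u₀, hu₀⟩ := Finset.card_pos.mp hA0
    -- d ≤ n + k
    have hdnk : d ≤ n + k := by
      have h1 : t u₀ ⊆ N := Finset.subset_biUnion_of_mem t hu₀
      have h2 : (t u₀).card ≤ n := Finset.card_le_card h1
      have h3 : G.degree u₀.1 ≤ (t u₀).card + S'.card := by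
        rw [← SimpleGraph.card_neighborFinset_eq_degree]
        exact Finset.card_le_card_sdiff_add_card
      have h4 : d ≤ G.degree u₀.1 := hUdeg u₀.1 (Finset.mem_sdiff.mp u₀.2).1
      omega
    -- a ≤ s - k
    have hA' : A.image Subtype.val ⊆ U \ U' := by
      intro w hw
      obtain ⟨u, _, rfl⟩ := Finset.mem_image.mp hw
      exact u.2
    have hA'card : (A.image Subtype.val).card = a :=
      Finset.card_image_of_injective _ Subtype.val_injective
    have hask : a + k ≤ s := by
      have := Finset.card_le_card hA'
      rw [hA'card, hUU'card] at this
      omega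
    -- N ⊆ S \ S'
    have hNS : N ⊆ S \ S' := Finset.biUnion_subset.mpr fun u _ => htS u
    set T := S' ∪ N with hT
    have hTS : T ⊆ S := Finset.union_subset hS' (hNS.trans (Finset.sdiff_subset))
    have hTcard : T.card = k + n := by
      rw [Finset.card_union_of_disjoint, hS'card]
      exact Finset.disjoint_left.mpr fun w hw hwN => (Finset.mem_sdiff.mp (hNS hwN)).2 hw
    have hkns : k + n ≤ s := by
      have := Finset.card_le_card hTS
      rw [hTcard, hS] at this; exact this
    -- sum over T
    have hsumT : ∑ v ∈ T, G.degree v ≤ (d + 1) * (k + n) + 1 := by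
      have h1 : ∑ v ∈ T, G.degree v
          ≤ ∑ v ∈ T, ((d + 1) + if G.degree v = d + 2 then 1 else 0) := by
        refine Finset.sum_le_sum fun v hv => ?_
        have := hSdeg v (hTS hv)
        by_cases h : G.degree v = d + 2 <;> simp [h] <;> omega
      rw [Finset.sum_add_distrib, Finset.sum_const, Finset.sum_boole] at h1
      have h2 : (T.filter fun v => G.degree v = d + 2).card ≤ 1 := by
        refine le_trans (Finset.card_le_card (Finset.filter_subset_filter _ hTS)) hSone
      simp only [Nat.cast_id, smul_eq_mul, hTcard] at h1
      calc ∑ v ∈ T, G.degree v ≤ (k + n) * (d + 1)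
            + (T.filter fun v => G.degree v = d + 2).card := h1
        _ ≤ (d + 1) * (k + n) + 1 := by rw [mul_comm]; omega
    -- sum over B := S \ T
    have hsumB : ∑ v ∈ S \ T, G.degree v ≤ (s - (k + n)) * ((s + 1) - a) := by
      have hBcard : (S \ T).card = s - (k + n) := by
        rw [Finset.card_sdiff_of_subset hTS, hS, hTcard]
      rw [← hBcard]
      have h1 : ∀ v ∈ S \ T, G.degree v ≤ (s + 1) - a := by
        intro v hv
        rw [Finset.mem_sdiff] at hv
        have hnbr : G.neighborFinset v ⊆ U \ A.image Subtype.val := by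
          intro w hw
          rw [SimpleGraph.mem_neighborFinset] at hw
          rw [Finset.mem_sdiff]
          refine ⟨hnbrS v hv.1 w hw, fun hwA => ?_⟩
          obtain ⟨u, huA, hu⟩ := Finset.mem_image.mp hwA
          have hvN : v ∈ N := by
            refine Finset.mem_biUnion.mpr ⟨u, huA, ?_⟩
            rw [Finset.mem_sdiff, SimpleGraph.mem_neighborFinset, hu]
            refine ⟨hw.symm, fun hvS' => hv.2 (Finset.mem_union.mpr (Or.inl hvS'))⟩
          exact hv.2 (Finset.mem_union.mpr (Or.inr hvN))
        have h2 : (U \ A.image Subtype.val).card = (s + 1) - a := by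
          rw [Finset.card_sdiff_of_subset (hA'.trans Finset.sdiff_subset), hU, hA'card]
        calc G.degree v = (G.neighborFinset v).card :=
              (SimpleGraph.card_neighborFinset_eq_degree _ _).symm
          _ ≤ (U \ A.image Subtype.val).card := Finset.card_le_card hnbr
          _ = (s + 1) - a := h2
      calc ∑ v ∈ S \ T, G.degree v ≤ ∑ _v ∈ S \ T, ((s + 1) - a) := Finset.sum_le_sum h1
        _ = (S \ T).card * ((s + 1) - a) := by rw [Finset.sum_const, smul_eq_mul]
      -- done
    -- total edge count
    have hsumU : (s + 1) * d ≤ ∑ u ∈ U, G.degree u := by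
      calc (s + 1) * d = U.card * d := by rw [hU]
        _ = ∑ _u ∈ U, d := by rw [Finset.sum_const, smul_eq_mul]
        _ ≤ ∑ u ∈ U, G.degree u := Finset.sum_le_sum hUdeg
    have hsplit : ∑ v ∈ S, G.degree v = ∑ v ∈ S \ T, G.degree v + ∑ v ∈ T, G.degree v :=
      (Finset.sum_sdiff hTS).symm
    have hmain : (s + 1) * d ≤ (d + 1) * (k + n) + 1 + (s - (k + n)) * ((s + 1) - a) := by
      have := hsumU
      rw [← hdouble, hsplit] at this
      omega
    -- final arithmetic contradiction, in ℤ
    have has1 : a ≤ s + 1 := by omega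
    have hZ : ((s : ℤ) + 1) * d
        ≤ (d + 1) * (k + n) + 1 + ((s : ℤ) - (k + n)) * ((s + 1) - a) := by
      have := hmain
      zify [hkns, has1] at this
      convert this using 2 <;> push_cast <;> ring
    have hna : (n : ℤ) + 1 ≤ a := by exact_mod_cast hlt
    have h3' : (d : ℤ) ≤ n + k := by exact_mod_cast hdnk
    have h5' : (a : ℤ) + k ≤ s := by exact_mod_cast hask
    have h1' : (s : ℤ) + k + 2 ≤ 2 * d := by exact_mod_cast hd1'
    nlinarith [mul_nonneg (by linarith : (0:ℤ) ≤ (s:ℤ) - k - n)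
        (by linarith : (0:ℤ) ≤ (a:ℤ) - n - 1),
      mul_nonneg (by linarith : (0:ℤ) ≤ (s:ℤ) - k - n)
        (by linarith : (0:ℤ) ≤ 2*(d:ℤ) - s - k - 2),
      mul_nonneg (by linarith : (0:ℤ) ≤ (n:ℤ) + k - d)
        (by linarith : (0:ℤ) ≤ (s:ℤ) - k - n)]
  -- apply Hall's theorem
  obtain ⟨f, hfinj, hft⟩ := (Finset.all_card_le_biUnion_card_iff_exists_injective t).mp hall
  have hfS : ∀ u : ι, f u ∈ S \ S' := fun u => htS u (hft u)
  -- f is a bijection onto S \ S'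
  have himg : Finset.univ.image f = S \ S' := by
    apply Finset.eq_of_subset_of_card_le
    · intro w hw
      obtain ⟨u, _, rfl⟩ := Finset.mem_image.mp hw
      exact hfS u
    · rw [Finset.card_image_of_injective _ hfinj, Finset.card_univ, hSS'card,
        Fintype.card_coe, hUU'card]
  have hfsurj : ∀ v ∈ S \ S', ∃ u : ι, f u = v := by
    intro v hv
    rw [← himg] at hv
    obtain ⟨u, _, hu⟩ := Finset.mem_image.mp hv
    exact ⟨u, hu⟩
  -- membership facts in the vertex set of the induced graph
  have hmemU : ∀ u : ι, u.1 ∈ {v : V | v ∉ S' ∪ U'} := by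
    intro u
    have h2 := Finset.mem_sdiff.mp u.2
    simp only [Set.mem_setOf_eq, Finset.mem_union]
    push_neg
    exact ⟨fun h => Finset.disjoint_left.mp hdisj (hS' h) h2.1, h2.2⟩
  have hmemF : ∀ u : ι, f u ∈ {v : V | v ∉ S' ∪ U'} := by
    intro u
    have h2 := Finset.mem_sdiff.mp (hfS u)
    simp only [Set.mem_setOf_eq, Finset.mem_union]
    push_neg
    exact ⟨h2.2, fun h => Finset.disjoint_left.mp hdisj h2.1 (hU' h)⟩
  have hadjF : ∀ u : ι, G.Adj u.1 (f u) := by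
    intro u
    have := (Finset.mem_sdiff.mp (hft u)).1
    exact (SimpleGraph.mem_neighborFinset _ _ _).mp this
  -- build the matching
  refine ⟨⟨Set.univ,
      fun x y => ∃ u : ι, (x.1 = u.1 ∧ y.1 = f u) ∨ (y.1 = u.1 ∧ x.1 = f u),
      ?_, fun _ => Set.mem_univ _, ?_⟩, ?_, fun v => Set.mem_univ _⟩
  · rintro x y ⟨u, ⟨hx, hy⟩ | ⟨hy, hx⟩⟩
    · show G.Adj x.1 y.1
      rw [hx, hy]; exact hadjF u
    · show G.Adj x.1 y.1
      rw [hx, hy]; exact (hadjF u).symm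
  · constructor; rintro x y ⟨u, h | h⟩
    · exact ⟨u, Or.inr h⟩
    · exact ⟨u, Or.inl h⟩
  · -- IsMatching
    intro x _
    have hx := x.2
    simp only [Set.mem_setOf_eq, Finset.mem_union] at hx
    push_neg at hx
    rcases Finset.mem_union.mp (hcover ▸ Finset.mem_univ x.1) with hxS | hxU
    · -- x ∈ S: match with the unique u with f u = x
      obtain ⟨u, hu⟩ := hfsurj x.1 (Finset.mem_sdiff.mpr ⟨hxS, hx.1⟩)
      refine ⟨⟨u.1, hmemU u⟩, ⟨u, Or.inr ⟨rfl, hu.symm⟩⟩, ?_⟩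
      rintro y ⟨u', ⟨hxu, hyf⟩ | ⟨hyu, hxf⟩⟩
      · exfalso
        have hxU' : x.1 ∈ U := by rw [hxu]; exact (Finset.mem_sdiff.mp u'.2).1
        exact Finset.disjoint_left.mp hdisj hxS hxU'
      · have : u' = u := hfinj (by rw [← hxf, hu])
        exact Subtype.ext (by rw [hyu, this])
    · -- x ∈ U
      have hxmem : x.1 ∈ U \ U' := Finset.mem_sdiff.mpr ⟨hxU, hx.2⟩
      set u : ι := ⟨x.1, hxmem⟩ with hudef
      refine ⟨⟨f u, hmemF u⟩, ⟨u, Or.inl ⟨rfl, rfl⟩⟩, ?_⟩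
      rintro y ⟨u', ⟨hxu, hyf⟩ | ⟨hyu, hxf⟩⟩
      · have : u' = u := Subtype.ext hxu.symm
        exact Subtype.ext (by rw [hyf, this])
      · exfalso
        have hxS : x.1 ∈ S := by rw [hxf]; exact (Finset.mem_sdiff.mp (hfS u')).1
        exact Finset.disjoint_left.mp hdisj hxS hxU
end

section
/- For every even integer n ≥ 34, there exists a graph of order n in which every vertex has degree D_n or D_n + 1 (where D_n = 2⌈n/4⌉ − 1) whose maximum number of pairwise disjoint perfect matchings is exactly ⌈n/4⌉. -/
open Finset

open scoped Classical

private lemma card_filter_fin (n : ℕ) (p : ℕ → Prop) [DecidablePred p] :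
    ((Finset.univ : Finset (Fin n)).filter (fun v => p v.val)).card
      = ((Finset.range n).filter p).card := by
  rw [Finset.card_filter, Finset.card_filter]
  exact Fin.sum_univ_eq_sum_range (fun x => if p x then 1 else 0) n

def P1 (k a b : ℕ) : Prop :=
  a ≠ b ∧ ((a < 2*k-2 ∧ 2*k-2 ≤ b) ∨ (b < 2*k-2 ∧ 2*k-2 ≤ a) ∨
    (2*k-2 ≤ a ∧ 2*k-2 ≤ b ∧ a/2 = b/2))

def G1 (k : ℕ) : SimpleGraph (Fin (4*k-2)) where
  Adj u v := P1 k u.val v.val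
  symm := by constructor; intro u v h; unfold P1 at h ⊢; omega
  loopless := by constructor; intro u h; unfold P1 at h; omega

lemma G1_deg (k : ℕ) (hk : 2 ≤ k) (v : Fin (4*k-2)) :
    (G1 k).degree v = 2*k-1 ∨ (G1 k).degree v = 2*k := by
  have hfe : (Finset.univ.filter ((G1 k).Adj v))
      = Finset.univ.filter (fun w : Fin (4*k-2) => P1 k v.val w.val) := rfl
  have hdeg : (G1 k).degree v
      = ((Finset.range (4*k-2)).filter (fun b => P1 k v.val b)).card := by
    rw [← SimpleGraph.card_neighborFinset_eq_degree,
      SimpleGraph.neighborFinset_eq_filter, hfe, card_filter_fin (4*k-2) (fun b => P1 k v.val b)]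
  have hv2 := v.isLt
  by_cases hA : v.val < 2*k-2
  · right
    rw [hdeg]
    have he : (Finset.range (4*k-2)).filter (fun b => P1 k v.val b)
        = Finset.Ico (2*k-2) (4*k-2) := by
      ext b
      simp only [mem_filter, mem_range, mem_Ico]
      unfold P1
      omega
    rw [he, Nat.card_Ico]
    omega
  · left
    rw [hdeg]
    have he : (Finset.range (4*k-2)).filter (fun b => P1 k v.val b)
        = insert (if v.val % 2 = 0 then v.val+1 else v.val-1) (Finset.range (2*k-2)) := by
      ext b
      simp only [mem_filter, mem_range, mem_insert]
      unfold P1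
      split_ifs <;> omega
    rw [he, Finset.card_insert_of_notMem (by split_ifs <;> simp only [mem_range] <;> omega),
      Finset.card_range]
    omega

def sig1 (k t x : ℕ) : ℕ :=
  if x < 2*k-2 then
    (2*k-2) + (if x + 2*t + 2 < 2*k then x + 2*t + 2 else x + 2*t + 2 - 2*k)
  else if x = 2*k-2 + 2*t then x + 1
  else if x = 2*k-2 + 2*t + 1 then x - 1
  else if 2*t + 2 ≤ x - (2*k-2) then x - (2*k-2) - (2*t+2) else x - (2*k-2) + 2*k - (2*t+2)

lemma sig1_lt (k t x : ℕ) (hk : 2 ≤ k) (ht : t < k) (hx : x < 4*k-2) :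
    sig1 k t x < 4*k-2 := by
  unfold sig1; split_ifs <;> omega

lemma sig1_adj (k t x : ℕ) (hk : 2 ≤ k) (ht : t < k) (hx : x < 4*k-2) :
    P1 k x (sig1 k t x) := by
  unfold P1 sig1; split_ifs <;> omega

lemma sig1_invol (k t x : ℕ) (hk : 2 ≤ k) (ht : t < k) (hx : x < 4*k-2) :
    sig1 k t (sig1 k t x) = x := by
  unfold sig1; split_ifs <;> omega

lemma sig1_ne (k t s x : ℕ) (hk : 2 ≤ k) (ht : t < k) (hs : s < k) (hne : t ≠ s)
    (hx : x < 4*k-2) : sig1 k t x ≠ sig1 k s x := by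
  unfold sig1; split_ifs <;> omega

def M1 (k t : ℕ) (hk : 2 ≤ k) (ht : t < k) : (G1 k).Subgraph where
  verts := Set.univ
  Adj u v := sig1 k t u.val = v.val
  adj_sub := by
    intro u v h
    have h2 := sig1_adj k t u.val hk ht u.isLt
    rw [h] at h2
    exact h2
  edge_vert := by intro u v _; trivial
  symm := by
    constructor
    intro u v h
    have h' : sig1 k t u.val = v.val := h
    have h2 := sig1_invol k t u.val hk ht u.isLt
    rw [h'] at h2
    exact h2

lemma M1_pm (k t : ℕ) (hk : 2 ≤ k) (ht : t < k) : (M1 k t hk ht).IsPerfectMatching := by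
  constructor
  · intro v _
    refine ⟨⟨sig1 k t v.val, sig1_lt k t v.val hk ht v.isLt⟩, rfl, ?_⟩
    intro y hy
    have h' : sig1 k t v.val = y.val := hy
    exact Fin.ext h'.symm
  · intro v; trivial

lemma M1_disj (k : ℕ) (hk : 2 ≤ k) {t s : ℕ} (ht : t < k) (hs : s < k) (hne : t ≠ s) :
    Disjoint (M1 k t hk ht).edgeSet (M1 k s hk hs).edgeSet := by
  rw [Set.disjoint_left]
  intro e
  induction e using Sym2.ind with
  | _ u v =>
    intro h1 h2
    rw [SimpleGraph.Subgraph.mem_edgeSet] at h1 h2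
    have e1 : sig1 k t u.val = v.val := h1
    have e2 : sig1 k s u.val = v.val := h2
    exact sig1_ne k t s u.val hk ht hs hne u.isLt (e1.trans e2.symm)

set_option maxHeartbeats 2000000 in
lemma main1 (k : ℕ) (hk : 9 ≤ k) :
    ∃ G : SimpleGraph (Fin (4*k-2)),
      (∀ v, G.degree v = 2*k-1 ∨ G.degree v = 2*k) ∧
      (∃ M : Fin k → G.Subgraph,
        (∀ i, (M i).IsPerfectMatching) ∧
        ∀ i j, i ≠ j → Disjoint (M i).edgeSet (M j).edgeSet) ∧
      ∀ M : Fin (k+1) → G.Subgraph,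
        (∀ i, (M i).IsPerfectMatching) →
        ¬ (∀ i j, i ≠ j → Disjoint (M i).edgeSet (M j).edgeSet) := by
  have hk2 : 2 ≤ k := by omega
  refine ⟨G1 k, fun v => G1_deg k hk2 v,
    ⟨fun t => M1 k t.val hk2 t.isLt, fun t => M1_pm k t.val hk2 t.isLt,
      fun i j hij => M1_disj k hk2 i.isLt j.isLt (fun h => hij (Fin.ext h))⟩, ?_⟩
  intro M hpm hdisj
  -- every perfect matching contains one of the k special edges {2k-2+2j, 2k-2+2j+1}
  have key : ∀ i : Fin (k+1), ∃ jn : ℕ, ∃ hj : jn < k,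
      (M i).Adj ⟨2*k-2+2*jn, by omega⟩ ⟨2*k-2+2*jn+1, by omega⟩ := by
    intro i
    obtain ⟨hmatch, hspan⟩ := hpm i
    have hex : ∀ v, ∃! w, (M i).Adj v w := fun v => hmatch (hspan v)
    set p : Fin (4*k-2) → Fin (4*k-2) := fun v => (hex v).choose with hp
    have hadj : ∀ v, (M i).Adj v (p v) := fun v => (hex v).choose_spec.1
    have huniq : ∀ v w, (M i).Adj v w → w = p v := fun v w h => (hex v).choose_spec.2 w h
    by_cases hcase : ∃ v : Fin (4*k-2), 2*k-2 ≤ v.val ∧ 2*k-2 ≤ (p v).val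
    · obtain ⟨v, hv1, hvp⟩ := hcase
      have hP : P1 k v.val (p v).val := (M i).adj_sub (hadj v)
      have hvlt := v.isLt
      have hplt := (p v).isLt
      obtain ⟨hne, hP⟩ := hP
      refine ⟨(v.val - (2*k-2))/2, by omega, ?_⟩
      have hor : (v.val = 2*k-2+2*((v.val - (2*k-2))/2)
            ∧ (p v).val = 2*k-2+2*((v.val - (2*k-2))/2)+1)
          ∨ ((p v).val = 2*k-2+2*((v.val - (2*k-2))/2)
            ∧ v.val = 2*k-2+2*((v.val - (2*k-2))/2)+1) := by
        omega
      rcases hor with ⟨h1, h2⟩ | ⟨h1, h2⟩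
      · have e1 : (⟨2*k-2+2*((v.val - (2*k-2))/2), by omega⟩ : Fin (4*k-2)) = v :=
          Fin.ext h1.symm
        have e2 : (⟨2*k-2+2*((v.val - (2*k-2))/2)+1, by omega⟩ : Fin (4*k-2)) = p v :=
          Fin.ext h2.symm
        rw [e1, e2]
        exact hadj v
      · have e1 : (⟨2*k-2+2*((v.val - (2*k-2))/2), by omega⟩ : Fin (4*k-2)) = p v :=
          Fin.ext h1.symm
        have e2 : (⟨2*k-2+2*((v.val - (2*k-2))/2)+1, by omega⟩ : Fin (4*k-2)) = v :=
          Fin.ext h2.symm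
        rw [e1, e2]
        exact (M i).adj_symm (hadj v)
    · exfalso
      push_neg at hcase
      have hmaps : ∀ v ∈ Finset.univ.filter (fun v : Fin (4*k-2) => 2*k-2 ≤ v.val),
          p v ∈ Finset.univ.filter (fun v : Fin (4*k-2) => v.val < 2*k-2) := by
        intro v hv
        simp only [mem_filter, mem_univ, true_and] at hv ⊢
        exact hcase v hv
      have hinj : Set.InjOn p
          (Finset.univ.filter (fun v : Fin (4*k-2) => 2*k-2 ≤ v.val)) := by
        intro a ha b hb hab
        have h1 := hadj a
        have h2 := hadj b
        rw [hab] at h1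
        have e1 := huniq (p b) a ((M i).adj_symm h1)
        have e2 := huniq (p b) b ((M i).adj_symm h2)
        exact e1.trans e2.symm
      have hcard := Finset.card_le_card_of_injOn p hmaps hinj
      have c1 : (Finset.univ.filter (fun v : Fin (4*k-2) => 2*k-2 ≤ v.val)).card = 2*k := by
        rw [card_filter_fin (4*k-2) (fun b => 2*k-2 ≤ b)]
        have he : (Finset.range (4*k-2)).filter (fun b => 2*k-2 ≤ b)
            = Finset.Ico (2*k-2) (4*k-2) := by
          ext b
          simp only [mem_filter, mem_range, mem_Ico]
          omega
        rw [he, Nat.card_Ico]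
        omega
      have c2 : (Finset.univ.filter (fun v : Fin (4*k-2) => v.val < 2*k-2)).card = 2*k-2 := by
        rw [card_filter_fin (4*k-2) (fun b => b < 2*k-2)]
        have he : (Finset.range (4*k-2)).filter (fun b => b < 2*k-2)
            = Finset.range (2*k-2) := by
          ext b
          simp only [mem_filter, mem_range]
          omega
        rw [he, Finset.card_range]
      omega
  choose jf hjlt hjf using key
  have hinj : Function.Injective (fun i => (⟨jf i, hjlt i⟩ : Fin k)) := by
    intro a b hab
    by_contra hne
    have hv : jf a = jf b := by
      have := congrArg Fin.val hab
      simpa using this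
    have e1 := hjf a
    have e2 := hjf b
    simp only [hv] at e1
    exact Set.disjoint_left.mp (hdisj a b hne)
      (SimpleGraph.Subgraph.mem_edgeSet.mpr e1)
      (SimpleGraph.Subgraph.mem_edgeSet.mpr e2)
  have hle := Fintype.card_le_of_injective _ hinj
  simp only [Fintype.card_fin] at hle
  omega

def Q2 (k a b : ℕ) : Prop :=
  (a < 2*k-2 ∧ 2*k-2 ≤ b ∧ b < 4*k-2 ∧ ¬(k-1 ≤ a ∧ b = a + k))
  ∨ (a < 2*k-2 ∧ k-1 ≤ a ∧ b = 4*k-2)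
  ∨ (2*k-2 ≤ a ∧ a < 3*k-2 ∧ b = 4*k-2)
  ∨ (2*k-2 ≤ a ∧ a < 4*k-2 ∧ a ≠ 2*k-2 ∧ b = 4*k-1)

def P2 (k a b : ℕ) : Prop := a ≠ b ∧ (Q2 k a b ∨ Q2 k b a)

def G2 (k : ℕ) : SimpleGraph (Fin (4*k)) where
  Adj u v := P2 k u.val v.val
  symm := ⟨fun u v h => ⟨Ne.symm h.1, h.2.symm⟩⟩
  loopless := ⟨fun u h => h.1 rfl⟩

set_option maxHeartbeats 8000000 in
lemma G2_deg (k : ℕ) (hk : 2 ≤ k) (v : Fin (4*k)) :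
    (G2 k).degree v = 2*k-1 ∨ (G2 k).degree v = 2*k := by
  have hfe : (Finset.univ.filter ((G2 k).Adj v))
      = Finset.univ.filter (fun w : Fin (4*k) => P2 k v.val w.val) := rfl
  have hdeg : (G2 k).degree v
      = ((Finset.range (4*k)).filter (fun b => P2 k v.val b)).card := by
    rw [← SimpleGraph.card_neighborFinset_eq_degree,
      SimpleGraph.neighborFinset_eq_filter, hfe, card_filter_fin (4*k) (fun b => P2 k v.val b)]
  have hv2 := v.isLt
  rw [hdeg]
  rcases (by omega : v.val < k-1 ∨ (k-1 ≤ v.val ∧ v.val < 2*k-2) ∨ v.val = 2*k-2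
      ∨ (2*k-2 < v.val ∧ v.val < 3*k-2) ∨ (3*k-2 ≤ v.val ∧ v.val < 4*k-2)
      ∨ v.val = 4*k-2 ∨ v.val = 4*k-1) with h | h | h | h | h | h | h
  · right
    have he : (Finset.range (4*k)).filter (fun b => P2 k v.val b)
        = Finset.Ico (2*k-2) (4*k-2) := by
      ext b; simp only [mem_filter, mem_range, mem_Ico]; unfold P2 Q2; omega
    rw [he, Nat.card_Ico]; omega
  · right
    have he : (Finset.range (4*k)).filter (fun b => P2 k v.val b)
        = insert (4*k-2) ((Finset.Ico (2*k-2) (4*k-2)).erase (v.val + k)) := by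
      ext b
      simp only [mem_filter, mem_range, mem_insert, mem_erase, mem_Ico]
      unfold P2 Q2; omega
    rw [he, Finset.card_insert_of_notMem (by simp only [mem_erase, mem_Ico]; omega),
      Finset.card_erase_of_mem (by simp only [mem_Ico]; omega), Nat.card_Ico]
    omega
  · left
    have he : (Finset.range (4*k)).filter (fun b => P2 k v.val b)
        = insert (4*k-2) (Finset.range (2*k-2)) := by
      ext b; simp only [mem_filter, mem_range, mem_insert]; unfold P2 Q2; omega
    rw [he, Finset.card_insert_of_notMem (by simp only [mem_range]; omega), Finset.card_range]
    omega
  · left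
    have he : (Finset.range (4*k)).filter (fun b => P2 k v.val b)
        = insert (4*k-2) (insert (4*k-1) ((Finset.range (2*k-2)).erase (v.val - k))) := by
      ext b
      simp only [mem_filter, mem_range, mem_insert, mem_erase]
      unfold P2 Q2; omega
    rw [he, Finset.card_insert_of_notMem
        (by simp only [mem_insert, mem_erase, mem_range]; omega),
      Finset.card_insert_of_notMem (by simp only [mem_erase, mem_range]; omega),
      Finset.card_erase_of_mem (by simp only [mem_range]; omega), Finset.card_range]
    omega
  · left
    have he : (Finset.range (4*k)).filter (fun b => P2 k v.val b)
        = insert (4*k-1) (Finset.range (2*k-2)) := by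
      ext b; simp only [mem_filter, mem_range, mem_insert]; unfold P2 Q2; omega
    rw [he, Finset.card_insert_of_notMem (by simp only [mem_range]; omega), Finset.card_range]
    omega
  · left
    have he : (Finset.range (4*k)).filter (fun b => P2 k v.val b)
        = Finset.Ico (k-1) (3*k-2) := by
      ext b; simp only [mem_filter, mem_range, mem_Ico]; unfold P2 Q2; omega
    rw [he, Nat.card_Ico]; omega
  · left
    have he : (Finset.range (4*k)).filter (fun b => P2 k v.val b)
        = Finset.Ico (2*k-1) (4*k-2) := by
      ext b; simp only [mem_filter, mem_range, mem_Ico]; unfold P2 Q2; omega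
    rw [he, Nat.card_Ico]; omega

def sig2 (k t x : ℕ) : ℕ :=
  if x < k-1 then 2*k-2 + (t+1+x)
  else if x < 2*k-2 then 2*k-2 + (if t+2+x < 2*k then t+2+x else t+2+x-(2*k))
  else if x = 4*k-2 then 2*k-2 + t
  else if x = 4*k-1 then 2*k-2 + k + t
  else if x = 2*k-2 + t then 4*k-2
  else if x = 2*k-2 + k + t then 4*k-1
  else if t+1 ≤ x-(2*k-2) ∧ x-(2*k-2) ≤ t+k-1 then x-(2*k-2)-(t+1)
  else if t+2 ≤ x-(2*k-2) then x-(2*k-2)-(t+2) else x-(2*k-2)+2*k-(t+2)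

lemma sig2_lt (k t x : ℕ) (hk : 2 ≤ k) (ht : t < k) (hx : x < 4*k) :
    sig2 k t x < 4*k := by
  unfold sig2; split_ifs <;> omega


section SigTwo
variable {k t x : ℕ}

lemma s2_r1 (h : x < k-1) : sig2 k t x = 2*k-2+(t+1+x) := by
  unfold sig2; split_ifs <;> omega
lemma s2_r2a (hk : 2 ≤ k) (h1 : k-1 ≤ x) (h2 : x < 2*k-2) (h3 : t+2+x < 2*k) :
    sig2 k t x = 2*k-2+(t+2+x) := by
  unfold sig2; split_ifs <;> omega
lemma s2_r2b (hk : 2 ≤ k) (h1 : k-1 ≤ x) (h2 : x < 2*k-2) (h3 : 2*k ≤ t+2+x) :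
    sig2 k t x = 2*k-2+(t+2+x-(2*k)) := by
  unfold sig2; split_ifs <;> omega
lemma s2_r3 (hk : 2 ≤ k) (h : x = 4*k-2) : sig2 k t x = 2*k-2+t := by
  unfold sig2; split_ifs <;> omega
lemma s2_r4 (hk : 2 ≤ k) (ht : t < k) (h : x = 4*k-1) : sig2 k t x = 2*k-2+k+t := by
  unfold sig2; split_ifs <;> omega
lemma s2_r5 (hk : 2 ≤ k) (ht : t < k) (h : x = 2*k-2+t) : sig2 k t x = 4*k-2 := by
  unfold sig2; split_ifs <;> omega
lemma s2_r6 (hk : 2 ≤ k) (ht : t < k) (h : x = 2*k-2+k+t) : sig2 k t x = 4*k-1 := by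
  unfold sig2; split_ifs <;> omega
lemma s2_r7 (hk : 2 ≤ k) (ht : t < k) (h1 : 2*k-2+t+1 ≤ x) (h2 : x ≤ 2*k-2+t+k-1) :
    sig2 k t x = x-(2*k-2)-(t+1) := by
  unfold sig2; split_ifs <;> omega
lemma s2_r8 (hk : 2 ≤ k) (ht : t < k) (h1 : 2*k-2+k+t+1 ≤ x) (h2 : x < 4*k-2) :
    sig2 k t x = x-(2*k-2)-(t+2) := by
  unfold sig2; split_ifs <;> omega
lemma s2_r9 (hk : 2 ≤ k) (ht : t < k) (h1 : 2*k-2 ≤ x) (h2 : x < 2*k-2+t) :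
    sig2 k t x = x-(2*k-2)+2*k-(t+2) := by
  unfold sig2; split_ifs <;> omega

lemma region_cover (hk : 2 ≤ k) (ht : t < k) (hx : x < 4*k) :
    x < k-1 ∨ (k-1 ≤ x ∧ x < 2*k-2 ∧ t+2+x < 2*k) ∨ (k-1 ≤ x ∧ x < 2*k-2 ∧ 2*k ≤ t+2+x)
    ∨ x = 4*k-2 ∨ x = 4*k-1 ∨ x = 2*k-2+t ∨ x = 2*k-2+k+t
    ∨ (2*k-2+t+1 ≤ x ∧ x ≤ 2*k-2+t+k-1 ∧ x ≠ 2*k-2+k+t)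
    ∨ (2*k-2+k+t+1 ≤ x ∧ x < 4*k-2) ∨ (2*k-2 ≤ x ∧ x < 2*k-2+t) := by
  omega

end SigTwo

set_option maxHeartbeats 1600000 in
lemma sig2_adj (k t x : ℕ) (hk : 2 ≤ k) (ht : t < k) (hx : x < 4*k) :
    P2 k x (sig2 k t x) := by
  rcases region_cover hk ht hx with h|⟨h1,h2,h3⟩|⟨h1,h2,h3⟩|h|h|h|h|⟨h1,h2,h3⟩|⟨h1,h2⟩|⟨h1,h2⟩
  · rw [s2_r1 h]
    exact ⟨by omega, Or.inl (Or.inl ⟨by omega, by omega, by omega, by omega⟩)⟩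
  · rw [s2_r2a hk h1 h2 h3]
    exact ⟨by omega, Or.inl (Or.inl ⟨by omega, by omega, by omega, by omega⟩)⟩
  · rw [s2_r2b hk h1 h2 h3]
    exact ⟨by omega, Or.inl (Or.inl ⟨by omega, by omega, by omega, by omega⟩)⟩
  · rw [s2_r3 hk h]
    exact ⟨by omega, Or.inr (Or.inr (Or.inr (Or.inl ⟨by omega, by omega, by omega⟩)))⟩
  · rw [s2_r4 hk ht h]
    exact ⟨by omega, Or.inr (Or.inr (Or.inr (Or.inr ⟨by omega, by omega, by omega, by omega⟩)))⟩
  · rw [s2_r5 hk ht h]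
    exact ⟨by omega, Or.inl (Or.inr (Or.inr (Or.inl ⟨by omega, by omega, by omega⟩)))⟩
  · rw [s2_r6 hk ht h]
    exact ⟨by omega, Or.inl (Or.inr (Or.inr (Or.inr ⟨by omega, by omega, by omega, by omega⟩)))⟩
  · rw [s2_r7 hk ht h1 h2]
    exact ⟨by omega, Or.inr (Or.inl ⟨by omega, by omega, by omega, by omega⟩)⟩
  · rw [s2_r8 hk ht h1 h2]
    exact ⟨by omega, Or.inr (Or.inl ⟨by omega, by omega, by omega, by omega⟩)⟩
  · rw [s2_r9 hk ht h1 h2]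
    exact ⟨by omega, Or.inr (Or.inl ⟨by omega, by omega, by omega, by omega⟩)⟩

set_option maxHeartbeats 1600000 in
lemma sig2_invol (k t x : ℕ) (hk : 2 ≤ k) (ht : t < k) (hx : x < 4*k) :
    sig2 k t (sig2 k t x) = x := by
  rcases region_cover hk ht hx with h|⟨h1,h2,h3⟩|⟨h1,h2,h3⟩|h|h|h|h|⟨h1,h2,h3⟩|⟨h1,h2⟩|⟨h1,h2⟩
  · rw [s2_r1 h, s2_r7 hk ht (by omega) (by omega)]; omega
  · rw [s2_r2a hk h1 h2 h3, s2_r8 hk ht (by omega) (by omega)]; omega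
  · rw [s2_r2b hk h1 h2 h3, s2_r9 hk ht (by omega) (by omega)]; omega
  · rw [s2_r3 hk h, s2_r5 hk ht (by omega)]; omega
  · rw [s2_r4 hk ht h, s2_r6 hk ht (by omega)]; omega
  · rw [s2_r5 hk ht h, s2_r3 hk (by omega)]; omega
  · rw [s2_r6 hk ht h, s2_r4 hk ht (by omega)]; omega
  · rw [s2_r7 hk ht h1 h2, s2_r1 (by omega)]; omega
  · rw [s2_r8 hk ht h1 h2, s2_r2a hk (by omega) (by omega) (by omega)]; omega
  · rw [s2_r9 hk ht h1 h2, s2_r2b hk (by omega) (by omega) (by omega)]; omega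

set_option maxHeartbeats 1600000 in
lemma sig2_ne (k t s x : ℕ) (hk : 2 ≤ k) (ht : t < k) (hs : s < k) (hne : t ≠ s)
    (hx : x < 4*k) : sig2 k t x ≠ sig2 k s x := by
  rcases region_cover hk ht hx with h|⟨h1,h2,h3⟩|⟨h1,h2,h3⟩|h|h|h|h|⟨h1,h2,h3⟩|⟨h1,h2⟩|⟨h1,h2⟩
  · rw [s2_r1 h]; unfold sig2; split_ifs <;> omega
  · rw [s2_r2a hk h1 h2 h3]; unfold sig2; split_ifs <;> omega
  · rw [s2_r2b hk h1 h2 h3]; unfold sig2; split_ifs <;> omega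
  · rw [s2_r3 hk h]; unfold sig2; split_ifs <;> omega
  · rw [s2_r4 hk ht h]; unfold sig2; split_ifs <;> omega
  · rw [s2_r5 hk ht h]; unfold sig2; split_ifs <;> omega
  · rw [s2_r6 hk ht h]; unfold sig2; split_ifs <;> omega
  · rw [s2_r7 hk ht h1 h2]; unfold sig2; split_ifs <;> omega
  · rw [s2_r8 hk ht h1 h2]; unfold sig2; split_ifs <;> omega
  · rw [s2_r9 hk ht h1 h2]; unfold sig2; split_ifs <;> omega

def M2 (k t : ℕ) (hk : 2 ≤ k) (ht : t < k) : (G2 k).Subgraph where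
  verts := Set.univ
  Adj u v := sig2 k t u.val = v.val
  adj_sub := by
    intro u v h
    have h2 := sig2_adj k t u.val hk ht u.isLt
    rw [h] at h2
    exact h2
  edge_vert := by intro u v _; trivial
  symm := by
    constructor
    intro u v h
    have h' : sig2 k t u.val = v.val := h
    have h2 := sig2_invol k t u.val hk ht u.isLt
    rw [h'] at h2
    exact h2

lemma M2_pm (k t : ℕ) (hk : 2 ≤ k) (ht : t < k) : (M2 k t hk ht).IsPerfectMatching := by
  constructor
  · intro v _
    refine ⟨⟨sig2 k t v.val, sig2_lt k t v.val hk ht v.isLt⟩, rfl, ?_⟩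
    intro y hy
    have h' : sig2 k t v.val = y.val := hy
    exact Fin.ext h'.symm
  · intro v; trivial

lemma M2_disj (k : ℕ) (hk : 2 ≤ k) {t s : ℕ} (ht : t < k) (hs : s < k) (hne : t ≠ s) :
    Disjoint (M2 k t hk ht).edgeSet (M2 k s hk hs).edgeSet := by
  rw [Set.disjoint_left]
  intro e
  induction e using Sym2.ind with
  | _ u v =>
    intro h1 h2
    rw [SimpleGraph.Subgraph.mem_edgeSet] at h1 h2
    have e1 : sig2 k t u.val = v.val := h1
    have e2 : sig2 k s u.val = v.val := h2
    exact sig2_ne k t s u.val hk ht hs hne u.isLt (e1.trans e2.symm)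

lemma main2 (k : ℕ) (hk : 9 ≤ k) :
    ∃ G : SimpleGraph (Fin (4*k)),
      (∀ v, G.degree v = 2*k-1 ∨ G.degree v = 2*k) ∧
      (∃ M : Fin k → G.Subgraph,
        (∀ i, (M i).IsPerfectMatching) ∧
        ∀ i j, i ≠ j → Disjoint (M i).edgeSet (M j).edgeSet) ∧
      ∀ M : Fin (k+1) → G.Subgraph,
        (∀ i, (M i).IsPerfectMatching) →
        ¬ (∀ i j, i ≠ j → Disjoint (M i).edgeSet (M j).edgeSet) := by
  have hk2 : 2 ≤ k := by omega
  refine ⟨G2 k, fun v => G2_deg k hk2 v,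
    ⟨fun t => M2 k t.val hk2 t.isLt, fun t => M2_pm k t.val hk2 t.isLt,
      fun i j hij => M2_disj k hk2 i.isLt j.isLt (fun h => hij (Fin.ext h))⟩, ?_⟩
  intro M hpm hdisj
  -- every perfect matching matches the vertex 4k-2 (β₁) to one of its k B'-neighbours
  have key : ∀ i : Fin (k+1), ∃ jn : ℕ, ∃ hj : jn < k,
      (M i).Adj ⟨4*k-2, by omega⟩ ⟨2*k-2+jn, by omega⟩ := by
    intro i
    obtain ⟨hmatch, hspan⟩ := hpm i
    have hex : ∀ v, ∃! w, (M i).Adj v w := fun v => hmatch (hspan v)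
    set p : Fin (4*k) → Fin (4*k) := fun v => (hex v).choose with hp
    have hadj : ∀ v, (M i).Adj v (p v) := fun v => (hex v).choose_spec.1
    have huniq : ∀ v w, (M i).Adj v w → w = p v := fun v w h => (hex v).choose_spec.2 w h
    set b1 : Fin (4*k) := ⟨4*k-2, by omega⟩ with hb1
    have hP : P2 k b1.val (p b1).val := (M i).adj_sub (hadj b1)
    have hplt := (p b1).isLt
    by_cases hc : 2*k-2 ≤ (p b1).val
    · have hP' : P2 k (4*k-2) (p b1).val := hP
      refine ⟨(p b1).val - (2*k-2), by unfold P2 Q2 at hP'; omega, ?_⟩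
      have e2 : (⟨2*k-2+((p b1).val - (2*k-2)), by omega⟩ : Fin (4*k)) = p b1 :=
        Fin.ext (by simp only []; omega)
      rw [e2]
      exact hadj b1
    · exfalso
      have hmaps : ∀ v ∈ Finset.univ.filter
            (fun v : Fin (4*k) => 2*k-2 ≤ v.val ∧ v.val < 4*k-2),
          p v ∈ insert (⟨4*k-1, by omega⟩ : Fin (4*k))
            ((Finset.univ.filter (fun v : Fin (4*k) => v.val < 2*k-2)).erase (p b1)) := by
        intro v hv
        simp only [mem_filter, mem_univ, true_and] at hv
        have hPv : P2 k v.val (p v).val := (M i).adj_sub (hadj v)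
        have hopt : (p v).val < 2*k-2 ∨ (p v).val = 4*k-2 ∨ (p v).val = 4*k-1 := by
          unfold P2 Q2 at hPv
          omega
        simp only [mem_insert, mem_erase, mem_filter, mem_univ, true_and]
        rcases hopt with ho | ho | ho
        · right
          constructor
          · intro hcontra
            have h1 := hadj v
            rw [hcontra] at h1
            have e1 := huniq (p b1) v ((M i).adj_symm h1)
            have e2 := huniq (p b1) b1 ((M i).adj_symm (hadj b1))
            have hvb : v = b1 := e1.trans e2.symm
            have hveq : v.val = 4*k-2 := congrArg Fin.val hvb
            omega
          · exact ho
        · exfalso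
          have hpvb : p v = b1 := Fin.ext (by rw [ho])
          have h1 : (M i).Adj b1 v := (M i).adj_symm (hpvb ▸ hadj v)
          have e1 := huniq b1 v h1
          have : v.val = (p b1).val := by rw [e1]
          omega
        · left
          exact Fin.ext (by rw [ho])
      have hinj : Set.InjOn p
          (Finset.univ.filter (fun v : Fin (4*k) => 2*k-2 ≤ v.val ∧ v.val < 4*k-2)) := by
        intro a ha b hb hab
        have h1 := hadj a
        have h2 := hadj b
        rw [hab] at h1
        have e1 := huniq (p b) a ((M i).adj_symm h1)
        have e2 := huniq (p b) b ((M i).adj_symm h2)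
        exact e1.trans e2.symm
      have hcard := Finset.card_le_card_of_injOn p hmaps hinj
      have c1 : (Finset.univ.filter
          (fun v : Fin (4*k) => 2*k-2 ≤ v.val ∧ v.val < 4*k-2)).card = 2*k := by
        rw [card_filter_fin (4*k) (fun b => 2*k-2 ≤ b ∧ b < 4*k-2)]
        have he : (Finset.range (4*k)).filter (fun b => 2*k-2 ≤ b ∧ b < 4*k-2)
            = Finset.Ico (2*k-2) (4*k-2) := by
          ext b
          simp only [mem_filter, mem_range, mem_Ico]
          omega
        rw [he, Nat.card_Ico]
        omega
      have c2 : (Finset.univ.filter (fun v : Fin (4*k) => v.val < 2*k-2)).card = 2*k-2 := by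
        rw [card_filter_fin (4*k) (fun b => b < 2*k-2)]
        have he : (Finset.range (4*k)).filter (fun b => b < 2*k-2)
            = Finset.range (2*k-2) := by
          ext b
          simp only [mem_filter, mem_range]
          omega
        rw [he, Finset.card_range]
      have c3 : (insert (⟨4*k-1, by omega⟩ : Fin (4*k))
          ((Finset.univ.filter (fun v : Fin (4*k) => v.val < 2*k-2)).erase (p b1))).card
          ≤ 2*k-1 := by
        calc _ ≤ ((Finset.univ.filter
              (fun v : Fin (4*k) => v.val < 2*k-2)).erase (p b1)).card + 1 :=
            Finset.card_insert_le _ _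
        _ ≤ (2*k-2-1) + 1 := by
            have := Finset.card_erase_of_mem (a := p b1)
              (s := Finset.univ.filter (fun v : Fin (4*k) => v.val < 2*k-2))
              (by simp only [mem_filter, mem_univ, true_and]; omega)
            omega
        _ ≤ 2*k-1 := by omega
      omega
  choose jf hjlt hjf using key
  have hinj : Function.Injective (fun i => (⟨jf i, hjlt i⟩ : Fin k)) := by
    intro a b hab
    by_contra hne
    have hv : jf a = jf b := by
      have := congrArg Fin.val hab
      simpa using this
    have e1 := hjf a
    have e2 := hjf b
    simp only [hv] at e1
    exact Set.disjoint_left.mp (hdisj a b hne)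
      (SimpleGraph.Subgraph.mem_edgeSet.mpr e1)
      (SimpleGraph.Subgraph.mem_edgeSet.mpr e2)
  have hle := Fintype.card_le_of_injective _ hinj
  simp only [Fintype.card_fin] at hle
  omega

open scoped Classical in
/-- Sharpness: for every even `n ≥ 34` there is a `{Dₙ, Dₙ+1}`-graph of order `n`
whose maximum number of pairwise disjoint perfect matchings is exactly `⌈n/4⌉`. -/
theorem stmt2 (n : ℕ) (hn : Even n) (h34 : 34 ≤ n) :
    ∃ G : SimpleGraph (Fin n),
      (∀ v, G.degree v = 2 * ((n + 3) / 4) - 1 ∨ G.degree v = 2 * ((n + 3) / 4)) ∧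
      (∃ M : Fin ((n + 3) / 4) → G.Subgraph,
        (∀ i, (M i).IsPerfectMatching) ∧
        ∀ i j, i ≠ j → Disjoint (M i).edgeSet (M j).edgeSet) ∧
      ∀ M : Fin ((n + 3) / 4 + 1) → G.Subgraph,
        (∀ i, (M i).IsPerfectMatching) →
        ¬ (∀ i j, i ≠ j → Disjoint (M i).edgeSet (M j).edgeSet) := by
  obtain ⟨m, hm⟩ := hn
  obtain ⟨k, hk9, hcase⟩ : ∃ k, 9 ≤ k ∧ (n = 4*k-2 ∨ n = 4*k) :=
    ⟨(n+3)/4, by omega, by omega⟩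
  have hkval : (n+3)/4 = k := by omega
  rw [hkval]
  rcases hcase with h | h
  · subst h
    exact main1 k hk9
  · subst h
    exact main2 k hk9
end

section
/- Suppose n/2 is odd. Let G be obtained from the complete bipartite graph with parts A, B of sizes n/2 − 1 and n/2 + 1 by adding a perfect matching on B (a set of (n/2+1)/2 disjoint edges within B covering all of B; note n/2 + 1 is even). Then G is a {n/2, n/2 + 1}-graph of order n, and any family of pairwise disjoint perfect matchings of G has cardinality at most n/4 rounded up, since every perfect matching of G contains exactly one edge with both endpoints in B. -/
/-- Endpoints of a `Sym2` as a `Finset`. -/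
def sym2ToFinset {V : Type*} [DecidableEq V] : Sym2 V → Finset V :=
  Sym2.lift ⟨fun x y => ({x, y} : Finset V), fun x y => Finset.pair_comm x y⟩

lemma mem_sym2ToFinset {V : Type*} [DecidableEq V] (v : V) (e : Sym2 V) :
    v ∈ sym2ToFinset e ↔ v ∈ e := by
  induction e using Sym2.inductionOn with
  | hf x y => simp [sym2ToFinset, Sym2.mem_iff]

/-- The construction for odd `n/2`: complete bipartite graph `K_{n/2−1, n/2+1}` plus a
perfect matching inside the larger part `B`. It is an `{n/2, n/2+1}`-graph, every perfect
matching uses exactly one edge inside `B`, and any family of pairwise disjoint perfect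
matchings has size at most `⌈n/4⌉`. -/
theorem stmt4 (n : ℕ) (hn : n % 2 = 0) (hodd : Odd (n / 2))
    {V : Type*} [Fintype V] [DecidableEq V] (hcard : Fintype.card V = n)
    (A B : Finset V) (hdisj : Disjoint A B) (hcover : A ∪ B = Finset.univ)
    (hA : A.card = n / 2 - 1) (hB : B.card = n / 2 + 1)
    (G : SimpleGraph V) [DecidableRel G.Adj]
    (hAB : ∀ a ∈ A, ∀ b ∈ B, G.Adj a b)
    (hAA : ∀ a ∈ A, ∀ a' ∈ A, ¬ G.Adj a a')
    (hBB : ∀ b ∈ B, ∃! b', b' ∈ B ∧ G.Adj b b') :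
    (∀ v, G.degree v = n / 2 ∨ G.degree v = n / 2 + 1) ∧
    (∀ M : G.Subgraph, M.IsPerfectMatching →
      ∃! e : Sym2 V, e ∈ M.edgeSet ∧ ∀ v ∈ e, v ∈ B) ∧
    ∀ (t : ℕ) (M : Fin t → G.Subgraph),
      (∀ i, (M i).IsPerfectMatching) →
      (∀ i j, i ≠ j → Disjoint (M i).edgeSet (M j).edgeSet) →
      t ≤ (n + 3) / 4 := by
  classical
  have hmem : ∀ v : V, v ∈ A ∨ v ∈ B := by
    intro v
    have : v ∈ A ∪ B := hcover ▸ Finset.mem_univ v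
    simpa [Finset.mem_union] using this
  have hnotboth : ∀ v : V, v ∈ A → v ∈ B → False := by
    intro v hvA hvB
    exact Finset.disjoint_left.mp hdisj hvA hvB
  obtain ⟨k, hk⟩ := hodd
  -- the unique B-neighbor function
  choose f hf hfuniq' using fun b hb => hBB b hb
  have hfB : ∀ b hb, f b hb ∈ B := fun b hb => (hf b hb).1
  have hfadj : ∀ b hb, G.Adj b (f b hb) := fun b hb => (hf b hb).2
  have hfuniq : ∀ b hb y, y ∈ B ∧ G.Adj b y → y = f b hb := hfuniq'
  -- adjacency from A lands in B
  have hAadjB : ∀ a ∈ A, ∀ v, G.Adj a v → v ∈ B := by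
    intro a ha v hadj
    rcases hmem v with hv | hv
    · exact absurd hadj (hAA a ha v hv)
    · exact hv
  -- Part 2, proved as a standalone claim
  have part2 : ∀ M : G.Subgraph, M.IsPerfectMatching →
      ∃! e : Sym2 V, e ∈ M.edgeSet ∧ ∀ v ∈ e, v ∈ B := by
    intro M hpm
    choose p hp hpuniq using fun v => hpm.1 (hpm.2 v)
    have hpG : ∀ v, G.Adj v (p v) := fun v => (hp v).adj_sub
    have hpp : ∀ v, p (p v) = v := fun v => (hpuniq (p v) v ((hp v).symm)).symm
    have hpne : ∀ v, p v ≠ v := fun v => fun h => G.irrefl (h ▸ hpG v)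
    have hpinj : Function.Injective p := by
      intro x y h
      have := hpuniq (p x) y (h ▸ (hp y).symm)
      rw [this, hpp]
    have hpA : ∀ a ∈ A, p a ∈ B := fun a ha => hAadjB a ha (p a) (hpG a)
    -- the set of B-vertices matched inside B
    set B' : Finset V := B.filter (fun b => p b ∈ B) with hB'
    set Bf : Finset V := B.filter (fun b => p b ∈ A) with hBf
    have hBsplit : Bf ∪ B' = B := by
      ext v
      simp only [hBf, hB', Finset.mem_union, Finset.mem_filter]
      constructor
      · rintro (⟨h, _⟩ | ⟨h, _⟩) <;> exact h
      · intro hv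
        rcases hmem (p v) with h | h
        · exact Or.inl ⟨hv, h⟩
        · exact Or.inr ⟨hv, h⟩
    have hBdisj : Disjoint Bf B' := by
      rw [Finset.disjoint_left]
      intro v hv hv'
      simp only [hBf, hB', Finset.mem_filter] at hv hv'
      exact hnotboth (p v) hv.2 hv'.2
    have himg : Bf.image p = A := by
      ext a
      simp only [Finset.mem_image, hBf, Finset.mem_filter]
      constructor
      · rintro ⟨b, ⟨_, h⟩, rfl⟩; exact h
      · intro ha
        exact ⟨p a, ⟨hpA a ha, by rw [hpp]; exact ha⟩, hpp a⟩
    have hcardBf : Bf.card = A.card := by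
      rw [← himg, Finset.card_image_of_injective _ hpinj]
    have hcardB' : B'.card = 2 := by
      have := Finset.card_union_of_disjoint hBdisj
      rw [hBsplit] at this
      omega
    -- B' is closed under p
    have hB'closed : ∀ b ∈ B', p b ∈ B' := by
      intro b hb
      simp only [hB', Finset.mem_filter] at hb ⊢
      exact ⟨hb.2, by rw [hpp]; exact hb.1⟩
    -- pick an element of B'
    obtain ⟨b1, hb1⟩ : ∃ b, b ∈ B' := Finset.card_pos.mp (by omega)
    have hpb1 : p b1 ∈ B' := hB'closed b1 hb1
    -- every element of B' is b1 or p b1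
    have hB'eq : ∀ b ∈ B', b = b1 ∨ b = p b1 := by
      intro b hb
      by_contra hcon
      push_neg at hcon
      have h3 : ({b, b1, p b1} : Finset V) ⊆ B' := by
        intro x hx
        simp only [Finset.mem_insert, Finset.mem_singleton] at hx
        rcases hx with rfl | rfl | rfl <;> [exact hb; exact hb1; exact hpb1]
      have hc3 : ({b, b1, p b1} : Finset V).card = 3 := by
        rw [Finset.card_insert_of_notMem (by simp [hcon.1, hcon.2]),
          Finset.card_insert_of_notMem (by simp [(hpne b1).symm]),
          Finset.card_singleton]
      have := Finset.card_le_card h3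
      omega
    have hb1B : b1 ∈ B := (Finset.mem_filter.mp hb1).1
    have hpb1B : p b1 ∈ B := (Finset.mem_filter.mp hb1).2
    refine ⟨s(b1, p b1), ⟨(hp b1), ?_⟩, ?_⟩
    · intro v hv
      rcases Sym2.mem_iff.mp hv with rfl | rfl
      · exact hb1B
      · exact hpb1B
    · rintro e ⟨he, heB⟩
      induction e using Sym2.inductionOn with
      | hf x y =>
        rw [SimpleGraph.Subgraph.mem_edgeSet] at he
        have hxB : x ∈ B := heB x (by simp)
        have hyB : y ∈ B := heB y (by simp)
        have hyx : y = p x := hpuniq x y he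
        have hxB' : x ∈ B' := by
          simp only [hB', Finset.mem_filter]
          exact ⟨hxB, hyx ▸ hyB⟩
        rcases hB'eq x hxB' with rfl | rfl
        · rw [hyx]
        · rw [hyx, hpp, Sym2.eq_swap]
  refine ⟨?_, part2, ?_⟩
  · -- Part 1: degrees
    intro v
    rcases hmem v with hv | hv
    · right
      have : G.neighborFinset v = B := by
        ext w
        rw [SimpleGraph.mem_neighborFinset]
        exact ⟨fun h => hAadjB v hv w h, fun h => hAB v hv w h⟩
      rw [SimpleGraph.degree, this, hB]
    · left
      have : G.neighborFinset v = insert (f v hv) A := by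
        ext w
        rw [SimpleGraph.mem_neighborFinset, Finset.mem_insert]
        constructor
        · intro h
          rcases hmem w with hw | hw
          · exact Or.inr hw
          · exact Or.inl (hfuniq v hv w ⟨hw, h⟩)
        · rintro (rfl | hw)
          · exact hfadj v hv
          · exact (hAB w hw v hv).symm
      rw [SimpleGraph.degree, this,
        Finset.card_insert_of_notMem (fun h => hnotboth _ h (hfB v hv)), hA]
      omega
  · -- Part 3
    intro t M hpm hdisjM
    -- the finset of G-edges inside B
    set S : Finset (Sym2 V) := G.edgeFinset.filter (fun e => ∀ v ∈ e, v ∈ B) with hS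
    -- each vertex of B is in at most one edge of S; endpoint finsets are pairwise disjoint
    have hScard2 : ∀ e ∈ S, (sym2ToFinset e).card = 2 := by
      intro e he
      induction e using Sym2.inductionOn with
      | hf x y =>
        simp only [hS, Finset.mem_filter, SimpleGraph.mem_edgeFinset,
          SimpleGraph.mem_edgeSet] at he
        have hne : x ≠ y := he.1.ne
        simp [sym2ToFinset, Finset.card_pair hne]
    have hSdisj : (S : Set (Sym2 V)).Pairwise
        (fun e e' => Disjoint (sym2ToFinset e) (sym2ToFinset e')) := by
      intro e he e' he' hne
      rw [Finset.disjoint_left]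
      intro v hv hv'
      rw [mem_sym2ToFinset] at hv hv'
      simp only [hS, Finset.coe_filter, Set.mem_setOf_eq, SimpleGraph.mem_edgeFinset,
        SimpleGraph.mem_edgeSet] at he he'
      -- v has two distinct B-neighbors: contradiction with uniqueness
      obtain ⟨w, hw⟩ := Sym2.mem_iff_exists.mp hv
      obtain ⟨w', hw'⟩ := Sym2.mem_iff_exists.mp hv'
      subst hw; subst hw'
      have hvB : v ∈ B := he.2 v (by simp)
      have hwB : w ∈ B := he.2 w (by simp)
      have hw'B : w' ∈ B := he'.2 w' (by simp)
      have hadj : G.Adj v w := he.1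
      have hadj' : G.Adj v w' := he'.1
      have h1 := hfuniq v hvB w ⟨hwB, hadj⟩
      have h2 := hfuniq v hvB w' ⟨hw'B, hadj'⟩
      exact hne (by rw [h1, h2])
    have hunion : S.biUnion (fun e => sym2ToFinset e) ⊆ B := by
      intro v hv
      obtain ⟨e, he, hve⟩ := Finset.mem_biUnion.mp hv
      rw [mem_sym2ToFinset] at hve
      simp only [hS, Finset.mem_filter] at he
      exact he.2 v hve
    have hcardS : 2 * S.card ≤ B.card := by
      have h1 : (S.biUnion (fun e => sym2ToFinset e)).card = ∑ e ∈ S, (sym2ToFinset e).card :=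
        Finset.card_biUnion (fun e he e' he' hne => hSdisj he he' hne)
      have h2 : ∑ e ∈ S, (sym2ToFinset e).card = 2 * S.card := by
        rw [Finset.sum_congr rfl hScard2, Finset.sum_const, smul_eq_mul, mul_comm]
      calc 2 * S.card = (S.biUnion (fun e => sym2ToFinset e)).card := by rw [h1, h2]
        _ ≤ B.card := Finset.card_le_card hunion
    -- injection from Fin t into S
    have key : ∀ i : Fin t, ∃ e : Sym2 V, e ∈ (M i).edgeSet ∧ e ∈ S := by
      intro i
      obtain ⟨e, ⟨heM, heB⟩, _⟩ := part2 (M i) (hpm i)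
      refine ⟨e, heM, ?_⟩
      simp only [hS, Finset.mem_filter, SimpleGraph.mem_edgeFinset]
      exact ⟨(M i).edgeSet_subset heM, heB⟩
    choose g hgM hgS using key
    have hginj : Function.Injective g := by
      intro i j h
      by_contra hne
      exact Set.disjoint_left.mp (hdisjM i j hne) (hgM i) (h ▸ hgM j)
    have ht : t ≤ S.card := by
      have := Finset.card_le_card_of_injOn (s := Finset.univ) (t := S) g
        (fun i _ => hgS i) (fun i _ j _ h => hginj h)
      simpa using this
    rw [hB] at hcardS
    omega
end

section
/- Let H be a graph of even order n with minimum degree at least ⌈n/4⌉, whose vertex set splits into two factor-critical components C₁ and C₂ with |C₁| ≤ |C₂|. Let M be a perfect matching of the complement of H, and let M' be a perfect matching of H ∪ M such that (H ∪ M) − M' consists of two factor-critical components C₁' and C₂' with |C₁'| ≤ |C₂'|. If there exists an edge of M joining C₁ and C₂ that does not belong to M', then V(C₁') ⊆ V(C₂); in particular V(C₁) ∩ V(C₁') = ∅ and V(C₂) ∩ V(C₂') ≠ ∅. -/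
/-- `C` is a factor-critical component of `H` (as a vertex set): deleting any vertex of `C`
leaves a set matchable by a matching of `H` with vertex set `C \ {v}`. -/
def SimpleGraph.FactorCriticalOn {V : Type*} (H : SimpleGraph V) (C : Set V) : Prop :=
  ∀ v ∈ C, ∃ M : H.Subgraph, M.verts = C \ {v} ∧ M.IsMatching

/-- A nonempty factor-critical set has odd cardinality. -/
lemma fc_odd {V : Type*} [Fintype V] {H : SimpleGraph V} {C : Set V}
    (h : H.FactorCriticalOn C) (hne : C.Nonempty) : Odd C.ncard := by
  classical
  obtain ⟨v, hv⟩ := hne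
  obtain ⟨M, hverts, hmatch⟩ := h v hv
  have heven : Even M.verts.toFinset.card := hmatch.even_card
  have h1 : M.verts.ncard = M.verts.toFinset.card := Set.ncard_eq_toFinset_card' _
  have h2 : (C \ {v}).ncard + 1 = C.ncard := Set.ncard_diff_singleton_add_one hv
  have h2' : M.verts.ncard = (C \ {v}).ncard := by rw [hverts]
  obtain ⟨m, hm⟩ := heven
  exact ⟨m, by omega⟩

/-- Lemma 3.2 of the paper. -/
theorem stmt7 {V : Type*} [Fintype V] (n : ℕ) (hcard : Fintype.card V = n)
    (hn : Even n) (H : SimpleGraph V)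
    (hmin : ∀ v : V, (n + 3) / 4 ≤ (H.neighborSet v).ncard)
    (C₁ C₂ : Set V) (hdisj : Disjoint C₁ C₂) (hcover : C₁ ∪ C₂ = Set.univ)
    (hne₁ : C₁.Nonempty) (hne₂ : C₂.Nonempty)
    (hnocross : ∀ u ∈ C₁, ∀ w ∈ C₂, ¬ H.Adj u w)
    (hfc₁ : H.FactorCriticalOn C₁) (hfc₂ : H.FactorCriticalOn C₂)
    (hle : C₁.ncard ≤ C₂.ncard)
    -- `M` is a perfect matching of the complement of `H`
    (M : SimpleGraph V) (hMcompl : M ≤ Hᶜ) (hMpm : ∀ v : V, ∃! w, M.Adj v w)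
    -- `M'` is a perfect matching of `H ∪ M` whose removal leaves two factor-critical
    -- components `C₁'` and `C₂'`
    (M' : (H ⊔ M).Subgraph) (hM' : M'.IsPerfectMatching)
    (C₁' C₂' : Set V) (hdisj' : Disjoint C₁' C₂') (hcover' : C₁' ∪ C₂' = Set.univ)
    (hne₁' : C₁'.Nonempty) (hne₂' : C₂'.Nonempty)
    (hnocross' : ∀ u ∈ C₁', ∀ w ∈ C₂', ¬ ((H ⊔ M) \ M'.spanningCoe).Adj u w)
    (hfc₁' : ((H ⊔ M) \ M'.spanningCoe).FactorCriticalOn C₁')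
    (hfc₂' : ((H ⊔ M) \ M'.spanningCoe).FactorCriticalOn C₂')
    (hle' : C₁'.ncard ≤ C₂'.ncard)
    -- some edge of `M` joining `C₁` and `C₂` does not belong to `M'`
    (hedge : ∃ u w, u ∈ C₁ ∧ w ∈ C₂ ∧ M.Adj u w ∧ ¬ M'.Adj u w) :
    C₁' ⊆ C₂ ∧ C₁ ∩ C₁' = ∅ ∧ (C₂ ∩ C₂').Nonempty := by
  classical
  obtain ⟨u, w, huC1, hwC2, hMuw, hM'uw⟩ := hedge
  set G : SimpleGraph V := (H ⊔ M) \ M'.spanningCoe with hGdef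
  set k : ℕ := (n + 3) / 4 with hkdef
  -- partner function for M'
  have hM'all : ∀ v : V, ∃! x, M'.Adj v x := fun v => hM'.1 (hM'.2 v)
  have hpex : ∀ v : V, ∃ x, M'.Adj v x ∧ ∀ y, M'.Adj v y → y = x := by
    intro v
    obtain ⟨x, hx, hx'⟩ := hM'all v
    exact ⟨x, hx, hx'⟩
  choose p hpadj hpuniq using hpex
  -- partner function for M
  have hmex : ∀ v : V, ∃ x, M.Adj v x := fun v => ⟨(hMpm v).choose, (hMpm v).choose_spec.1⟩
  choose m hmadj using hmex
  -- closure under adjacency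
  have closure : ∀ (G' : SimpleGraph V) (A B : Set V), A ∪ B = Set.univ →
      (∀ x ∈ A, ∀ y ∈ B, ¬ G'.Adj x y) → ∀ v x, v ∈ A → G'.Adj v x → x ∈ A := by
    intro G' A B hcov hno v x hv hadj
    by_contra hx
    have hxB : x ∈ B := by
      have : x ∈ A ∪ B := hcov ▸ Set.mem_univ x
      exact this.resolve_left hx
    exact hno v hv x hxB hadj
  -- G-adjacency from H-edges avoiding the M'-partner
  have hGadjH : ∀ v x, H.Adj v x → x ≠ p v → G.Adj v x := by
    intro v x h hne
    rw [hGdef, SimpleGraph.sdiff_adj]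
    exact ⟨Or.inl h, fun hM'adj => hne (hpuniq v x (by simpa using hM'adj))⟩
  have hGadjM : ∀ v x, M.Adj v x → x ≠ p v → G.Adj v x := by
    intro v x h hne
    rw [hGdef, SimpleGraph.sdiff_adj]
    exact ⟨Or.inr h, fun hM'adj => hne (hpuniq v x (by simpa using hM'adj))⟩
  -- neighbor set facts
  have hnbH : ∀ v x, x ∈ H.neighborSet v ↔ H.Adj v x := fun v x => Iff.rfl
  have hnself : ∀ v, v ∉ H.neighborSet v := fun v h => H.irrefl h
  have hmnotnb : ∀ v, m v ∉ H.neighborSet v := by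
    intro v h
    exact (hMcompl (hmadj v)).2 h
  have hmne : ∀ v, m v ≠ v := fun v h => M.irrefl (h ▸ hmadj v)
  -- key degree bound: a vertex in A ∩ A' forces (A ∩ A').ncard ≥ k
  have key : ∀ (A B A' B' : Set V), A ∪ B = Set.univ → A' ∪ B' = Set.univ →
      (∀ x ∈ A, ∀ y ∈ B, ¬ H.Adj x y) → (∀ x ∈ A', ∀ y ∈ B', ¬ G.Adj x y) →
      ∀ v, v ∈ A ∩ A' → k ≤ (A ∩ A').ncard := by
    intro A B A' B' hcov hcov' hno hno' v hv
    set S : Set V := insert v (H.neighborSet v \ {p v}) with hSdef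
    have hSsub : S ⊆ A ∩ A' := by
      intro x hx
      rcases hx with rfl | ⟨hxN, hxp⟩
      · exact hv
      · have hH : H.Adj v x := hxN
        have hG : G.Adj v x := hGadjH v x hH (by simpa using hxp)
        exact ⟨closure H A B hcov hno v x hv.1 hH, closure G A' B' hcov' hno' v x hv.2 hG⟩
    have h1 : H.neighborSet v ⊆ insert (p v) (H.neighborSet v \ {p v}) := by
      intro x hx
      by_cases hxp : x = p v
      · exact hxp ▸ Set.mem_insert _ _
      · exact Set.mem_insert_of_mem _ ⟨hx, hxp⟩
    have h2 : (H.neighborSet v).ncard ≤ (H.neighborSet v \ {p v}).ncard + 1 :=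
      le_trans (Set.ncard_le_ncard h1) (Set.ncard_insert_le _ _)
    have h3 : S.ncard = (H.neighborSet v \ {p v}).ncard + 1 :=
      Set.ncard_insert_of_notMem (fun h => hnself v h.1)
    have h4 : S.ncard ≤ (A ∩ A').ncard := Set.ncard_le_ncard hSsub
    have := hmin v
    omega
  -- any old component containing a vertex has at least k+1 elements
  have keyOld : ∀ (A B : Set V), A ∪ B = Set.univ →
      (∀ x ∈ A, ∀ y ∈ B, ¬ H.Adj x y) → ∀ v, v ∈ A → k + 1 ≤ A.ncard := by
    intro A B hcov hno v hv
    set S : Set V := insert v (H.neighborSet v) with hSdef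
    have hSsub : S ⊆ A := by
      intro x hx
      rcases hx with rfl | hxN
      · exact hv
      · exact closure H A B hcov hno v x hv hxN
    have h3 : S.ncard = (H.neighborSet v).ncard + 1 :=
      Set.ncard_insert_of_notMem (hnself v)
    have h4 : S.ncard ≤ A.ncard := Set.ncard_le_ncard hSsub
    have := hmin v
    omega
  -- any new component containing a vertex has at least k+1 elements
  have keyNew : ∀ (A' B' : Set V), A' ∪ B' = Set.univ →
      (∀ x ∈ A', ∀ y ∈ B', ¬ G.Adj x y) → ∀ v, v ∈ A' → k + 1 ≤ A'.ncard := by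
    intro A' B' hcov' hno' v hv
    set T : Set V := insert (m v) (H.neighborSet v) with hTdef
    set S : Set V := insert v (T \ {p v}) with hSdef
    have hSsub : S ⊆ A' := by
      intro x hx
      rcases hx with rfl | ⟨hxT, hxp⟩
      · exact hv
      · have hG : G.Adj v x := by
          rcases hxT with h | hxN
          · exact hGadjM v x (by rw [h]; exact hmadj v) (by simpa using hxp)
          · exact hGadjH v x hxN (by simpa using hxp)
        exact closure G A' B' hcov' hno' v x hv hG
    have hT : T.ncard = (H.neighborSet v).ncard + 1 :=
      Set.ncard_insert_of_notMem (hmnotnb v)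
    have h1 : T ⊆ insert (p v) (T \ {p v}) := by
      intro x hx
      by_cases hxp : x = p v
      · exact hxp ▸ Set.mem_insert _ _
      · exact Set.mem_insert_of_mem _ ⟨hx, hxp⟩
    have h2 : T.ncard ≤ (T \ {p v}).ncard + 1 :=
      le_trans (Set.ncard_le_ncard h1) (Set.ncard_insert_le _ _)
    have hvT : v ∉ T \ {p v} := by
      rintro ⟨hvT, -⟩
      rcases hvT with h | h
      · exact hmne v h.symm
      · exact hnself v h
    have h3 : S.ncard = (T \ {p v}).ncard + 1 := Set.ncard_insert_of_notMem hvT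
    have h4 : S.ncard ≤ A'.ncard := Set.ncard_le_ncard hSsub
    have := hmin v
    omega
  -- symmetric no-cross versions
  have hnocross₂ : ∀ x ∈ C₂, ∀ y ∈ C₁, ¬ H.Adj x y :=
    fun x hx y hy h => hnocross y hy x hx h.symm
  have hnocross₂' : ∀ x ∈ C₂', ∀ y ∈ C₁', ¬ G.Adj x y :=
    fun x hx y hy h => hnocross' y hy x hx h.symm
  have hcover₂ : C₂ ∪ C₁ = Set.univ := by rw [Set.union_comm]; exact hcover
  have hcover₂' : C₂' ∪ C₁' = Set.univ := by rw [Set.union_comm]; exact hcover'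
  -- cardinal bookkeeping
  set a := (C₁ ∩ C₁').ncard with hadef
  set b := (C₂ ∩ C₁').ncard with hbdef
  set c := (C₁ ∩ C₂').ncard with hcdef
  set d := (C₂ ∩ C₂').ncard with hddef
  have hsplit : ∀ (A : Set V), A.ncard = (A ∩ C₁').ncard + (A ∩ C₂').ncard := by
    intro A
    rw [← Set.ncard_union_eq (hdisj'.mono Set.inter_subset_right Set.inter_subset_right),
      ← Set.inter_union_distrib_left, hcover', Set.inter_univ]
  have hA1 : C₁.ncard = a + c := hsplit C₁
  have hA2 : C₂.ncard = b + d := hsplit C₂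
  have hA1' : C₁'.ncard = a + b := by
    rw [← Set.ncard_union_eq (hdisj.mono Set.inter_subset_left Set.inter_subset_left)]
    rw [show C₁ ∩ C₁' ∪ C₂ ∩ C₁' = C₁' from by
      rw [← Set.union_inter_distrib_right, hcover, Set.univ_inter]]
  have hA2' : C₂'.ncard = c + d := by
    rw [← Set.ncard_union_eq (hdisj.mono Set.inter_subset_left Set.inter_subset_left)]
    rw [show C₁ ∩ C₂' ∪ C₂ ∩ C₂' = C₂' from by
      rw [← Set.union_inter_distrib_right, hcover, Set.univ_inter]]
  have htot : C₁.ncard + C₂.ncard = n := by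
    rw [← Set.ncard_union_eq hdisj, hcover, Set.ncard_univ, Nat.card_eq_fintype_card, hcard]
  -- odd cardinalities
  obtain ⟨o1, ho1⟩ := fc_odd hfc₁ hne₁
  obtain ⟨o2, ho2⟩ := fc_odd hfc₂ hne₂
  obtain ⟨o1', ho1'⟩ := fc_odd hfc₁' hne₁'
  obtain ⟨o2', ho2'⟩ := fc_odd hfc₂' hne₂'
  obtain ⟨nhalf, hnhalf⟩ := hn
  -- lower bounds for old/new components
  have hC1big : k + 1 ≤ C₁.ncard := keyOld C₁ C₂ hcover hnocross u huC1
  have hC2big : k + 1 ≤ C₂.ncard := keyOld C₂ C₁ hcover₂ hnocross₂ w hwC2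
  -- nonempty intersections are big
  have hka : (C₁ ∩ C₁').Nonempty → k ≤ a := by
    rintro ⟨v, hv⟩; exact key C₁ C₂ C₁' C₂' hcover hcover' hnocross hnocross' v hv
  have hkb : (C₂ ∩ C₁').Nonempty → k ≤ b := by
    rintro ⟨v, hv⟩; exact key C₂ C₁ C₁' C₂' hcover₂ hcover' hnocross₂ hnocross' v hv
  have hkc : (C₁ ∩ C₂').Nonempty → k ≤ c := by
    rintro ⟨v, hv⟩; exact key C₁ C₂ C₂' C₁' hcover hcover₂' hnocross hnocross₂' v hv
  have hkd : (C₂ ∩ C₂').Nonempty → k ≤ d := by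
    rintro ⟨v, hv⟩; exact key C₂ C₁ C₂' C₁' hcover₂ hcover₂' hnocross₂ hnocross₂' v hv
  -- the cross edge uw lies in G
  have hne_p : w ≠ p u := fun h => hM'uw (h ▸ hpadj u)
  have hGuw : G.Adj u w := hGadjM u w hMuw hne_p
  -- nonemptiness from zero-avoidance via ncard
  have nonempty_of_pos : ∀ (A : Set V), 0 < A.ncard → A.Nonempty := by
    intro A h
    exact (Set.ncard_pos).mp h
  -- case on which new component contains u
  have hu' : u ∈ C₁' ∨ u ∈ C₂' := by
    have : u ∈ C₁' ∪ C₂' := hcover' ▸ Set.mem_univ u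
    exact this
  rcases hu' with huC1' | huC2'
  · -- u, w ∈ C₁' : derive contradiction
    exfalso
    have hwC1' : w ∈ C₁' := closure G C₁' C₂' hcover' hnocross' u w huC1' hGuw
    have ha : k ≤ a := hka ⟨u, huC1, huC1'⟩
    have hb : k ≤ b := hkb ⟨w, hwC2, hwC1'⟩
    -- either c and d are both ≥ k (impossible by parity) or one of them is 0
    rcases Nat.eq_zero_or_pos c with hc0 | hcpos
    · -- c = 0: C₁ ⊆ C₁', so a = |C₁| ≥ k+1; and |C₁'| ≤ |C₂'| = d
      omega
    · have hc : k ≤ c := hkc (nonempty_of_pos _ hcpos)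
      rcases Nat.eq_zero_or_pos d with hd0 | hdpos
      · -- d = 0: b = |C₂| ≥ k+1; |C₁'| ≤ |C₂'| = c
        omega
      · have hd : k ≤ d := hkd (nonempty_of_pos _ hdpos)
        -- all four ≥ k : forces n = 4k and |C₁| = 2k even, contradiction
        omega
  · -- u, w ∈ C₂'
    have hwC2' : w ∈ C₂' := closure G C₂' C₁' hcover₂' hnocross₂' u w huC2' hGuw
    have hc : k ≤ c := hkc ⟨u, huC1, huC2'⟩
    have hd : k ≤ d := hkd ⟨w, hwC2, hwC2'⟩
    have ha0 : a = 0 := by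
      by_contra ha0
      have ha : k ≤ a := hka (nonempty_of_pos _ (Nat.pos_of_ne_zero ha0))
      rcases Nat.eq_zero_or_pos b with hb0 | hbpos
      · -- b = 0: |C₁'| = a ≥ k+1 and |C₁| = a + c ≥ 2k+1 > n/2
        obtain ⟨v, hv⟩ := nonempty_of_pos _ (Nat.pos_of_ne_zero ha0)
        have hC1'big : k + 1 ≤ C₁'.ncard := keyNew C₁' C₂' hcover' hnocross' v hv.2
        omega
      · have hb : k ≤ b := hkb (nonempty_of_pos _ hbpos)
        omega
    have hempty : C₁ ∩ C₁' = ∅ := (Set.ncard_eq_zero (Set.toFinite _)).mp ha0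
    refine ⟨?_, hempty, ⟨w, hwC2, hwC2'⟩⟩
    intro x hx
    have : x ∈ C₁ ∪ C₂ := hcover ▸ Set.mem_univ x
    rcases this with h | h
    · have hmem : x ∈ C₁ ∩ C₁' := ⟨h, hx⟩
      rw [hempty] at hmem
      exact hmem.elim
    · exact h
end

section
/- Let G be a connected graph of even order n with minimum degree strictly greater than n/2. Then G is bi-critical: for any two distinct vertices u and v, the graph G − u − v has a perfect matching. -/
open Set SimpleGraph

section Aux

variable {V : Type*} [Fintype V] {G : SimpleGraph V}

lemma matching_eq_of_adj {M : G.Subgraph} (hM : M.IsMatching) {a x y : V}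
    (h1 : M.Adj a x) (h2 : M.Adj a y) : x = y := by
  obtain ⟨w, _, hu⟩ := hM (M.edge_vert h1)
  exact (hu x h1).trans (hu y h2).symm

lemma matching_deleteVerts_pair {M : G.Subgraph} (hM : M.IsMatching) {a b : V}
    (hab : M.Adj a b) : (M.deleteVerts {a, b}).IsMatching := by
  intro v hv
  rw [SimpleGraph.Subgraph.deleteVerts_verts] at hv
  obtain ⟨hvM, hvab⟩ := hv
  obtain ⟨w, hw, huniq⟩ := hM hvM
  refine ⟨w, ?_, ?_⟩
  · show (M.deleteVerts {a, b}).Adj v w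
    rw [SimpleGraph.Subgraph.deleteVerts_adj]
    refine ⟨hvM, hvab, M.edge_vert hw.symm, ?_, hw⟩
    rintro (rfl | rfl)
    · exact hvab (Or.inr (matching_eq_of_adj hM hw.symm hab))
    · exact hvab (Or.inl (matching_eq_of_adj hM hw.symm hab.symm))
  · intro y hy
    rw [SimpleGraph.Subgraph.deleteVerts_adj] at hy
    exact huniq y hy.2.2.2.2

/-- Key lemma: if every vertex of `s` has at least `s.ncard / 2` neighbors inside `s`
and `s.ncard` is even, then there is a matching with vertex set exactly `s`. -/
lemma key_matching (G : SimpleGraph V) (s : Set V)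
    (heven : Even s.ncard)
    (hdeg : ∀ w ∈ s, s.ncard ≤ 2 * ((G.neighborSet w) ∩ s).ncard) :
    ∃ M : G.Subgraph, M.verts = s ∧ M.IsMatching := by
  classical
  set N : Set ℕ := {n | ∃ M : G.Subgraph, M.IsMatching ∧ M.verts ⊆ s ∧ M.verts.ncard = n} with hN
  have hne : N.Nonempty := ⟨0, ⊥, by intro v hv; simp [SimpleGraph.Subgraph.verts_bot] at hv,
    by simp [SimpleGraph.Subgraph.verts_bot], by simp [SimpleGraph.Subgraph.verts_bot]⟩
  have hbdd : BddAbove N := by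
    refine ⟨s.ncard, ?_⟩
    rintro n ⟨M, _, hsub, rfl⟩
    exact Set.ncard_le_ncard hsub s.toFinite
  obtain ⟨M, hM, hMs, hcard⟩ := Nat.sSup_mem hne hbdd
  have hmax : ∀ M' : G.Subgraph, M'.IsMatching → M'.verts ⊆ s →
      M'.verts.ncard ≤ M.verts.ncard := by
    intro M' h1 h2
    rw [hcard]
    exact le_csSup hbdd ⟨M', h1, h2, rfl⟩
  refine ⟨M, ?_, hM⟩
  by_contra hne'
  -- There are at least two vertices of `s` outside `M.verts`.
  have hMeven : Even M.verts.ncard := by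
    haveI : Fintype M.verts := Set.Finite.fintype M.verts.toFinite
    have := hM.even_card
    rwa [Set.ncard_eq_toFinset_card']
  have hdiffcard : (s \ M.verts).ncard + M.verts.ncard = s.ncard := by
    rw [← Set.ncard_union_eq disjoint_sdiff_left ((s \ M.verts).toFinite) (M.verts.toFinite),
      Set.diff_union_of_subset hMs]
  have hdiffne : (s \ M.verts).Nonempty := by
    rw [Set.diff_nonempty]
    intro h
    exact hne' (Set.Subset.antisymm hMs h)
  have hdiff2 : 1 < (s \ M.verts).ncard := by
    apply Set.one_lt_ncard_of_nonempty_of_even (s \ M.verts).toFinite hdiffne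
    rcases heven with ⟨k, hk⟩
    rcases hMeven with ⟨m, hm⟩
    exact ⟨k - m, by omega⟩
  obtain ⟨x, y, hx, hy, hxy⟩ := (Set.one_lt_ncard_iff ((s \ M.verts).toFinite)).mp hdiff2
  -- augmenting by a single edge from an unmatched vertex
  have haug : ∀ z ∈ s \ M.verts, ∀ w ∈ s, G.Adj z w → w ∈ M.verts := by
    intro z hz w hw hadj
    by_contra hwM
    have hmatch : (M ⊔ G.subgraphOfAdj hadj).IsMatching := by
      apply hM.sup (SimpleGraph.Subgraph.IsMatching.subgraphOfAdj hadj)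
      rw [hM.support_eq_verts, SimpleGraph.support_subgraphOfAdj]
      rw [Set.disjoint_right]
      rintro v (rfl | rfl)
      · exact hz.2
      · exact hwM
    have hsub : (M ⊔ G.subgraphOfAdj hadj).verts ⊆ s := by
      rw [SimpleGraph.Subgraph.verts_sup]
      apply Set.union_subset hMs
      rintro v (rfl | rfl) <;> [exact hz.1; exact hw]
    have := hmax _ hmatch hsub
    rw [SimpleGraph.Subgraph.verts_sup, SimpleGraph.subgraphOfAdj_verts,
      Set.ncard_union_eq (by
        rw [Set.disjoint_right]; rintro v (rfl | rfl); exacts [hz.2, hwM])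
      (M.verts.toFinite) (Set.toFinite _),
      Set.ncard_pair hadj.ne] at this
    omega
  -- the pairing function of the matching
  set f : V → V := fun v => if h : v ∈ M.verts then (hM h).choose else v with hf
  have hfadj : ∀ v (h : v ∈ M.verts), M.Adj v (f v) := by
    intro v h
    simp only [hf, dif_pos h]
    exact (hM h).choose_spec.1
  have hfuniq : ∀ v (h : v ∈ M.verts), ∀ w, M.Adj v w → w = f v := by
    intro v h w hw
    simp only [hf, dif_pos h]
    exact (hM h).choose_spec.2 w hw
  have hfmem : ∀ v (h : v ∈ M.verts), f v ∈ M.verts :=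
    fun v h => M.edge_vert (hfadj v h).symm
  have hfinv : ∀ v (h : v ∈ M.verts), f (f v) = v :=
    fun v h => (hfuniq (f v) (hfmem v h) v (hfadj v h).symm).symm
  have hfinj : Set.InjOn f M.verts := by
    intro v hv w hw he
    rw [← hfinv v hv, ← hfinv w hw, he]
  -- counting argument to find a matched edge {a, b} with x ~ a and y ~ b
  set A : Set V := G.neighborSet x ∩ s with hA
  set B : Set V := G.neighborSet y ∩ s with hB
  have hAM : A ⊆ M.verts := fun z hz => haug x hx z hz.2 hz.1
  have hBM : B ⊆ M.verts := fun z hz => haug y hy z hz.2 hz.1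
  have hexists : ∃ a ∈ A, f a ∈ B := by
    by_contra hcon
    push_neg at hcon
    have hdisj : Disjoint (f '' A) B := by
      rw [Set.disjoint_left]
      rintro z ⟨a, ha, rfl⟩
      exact hcon a ha
    have himg : (f '' A).ncard = A.ncard :=
      Set.ncard_image_of_injOn (hfinj.mono hAM)
    have hsub : f '' A ∪ B ⊆ M.verts := by
      apply Set.union_subset _ hBM
      rintro z ⟨a, ha, rfl⟩
      exact hfmem a (hAM ha)
    have h1 : (f '' A).ncard + B.ncard ≤ M.verts.ncard := by
      rw [← Set.ncard_union_eq hdisj (Set.toFinite _) (Set.toFinite _)]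
      exact Set.ncard_le_ncard hsub (M.verts.toFinite)
    have h2 : M.verts.ncard + 2 ≤ s.ncard := by
      have hsub2 : M.verts ∪ {x, y} ⊆ s := by
        apply Set.union_subset hMs
        rintro v (rfl | rfl) <;> [exact hx.1; exact hy.1]
      have := Set.ncard_le_ncard hsub2 s.toFinite
      rwa [Set.ncard_union_eq (by
        rw [Set.disjoint_right]; rintro v (rfl | rfl); exacts [hx.2, hy.2])
        (M.verts.toFinite) (Set.toFinite _), Set.ncard_pair hxy] at this
    have h3 := hdeg x hx.1
    have h4 := hdeg y hy.1
    rw [← hA] at h3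
    rw [← hB] at h4
    omega
  obtain ⟨a, ha, hb⟩ := hexists
  have haM : a ∈ M.verts := hAM ha
  obtain ⟨b, hbdef⟩ : ∃ b, b = f a := ⟨f a, rfl⟩
  rw [← hbdef] at hb
  have hbM : b ∈ M.verts := hbdef ▸ hfmem a haM
  have hMab : M.Adj a b := hbdef ▸ hfadj a haM
  have hxa : G.Adj x a := ha.1
  have hyb : G.Adj y b := hb.1
  have hxM : x ∉ M.verts := hx.2
  have hyM : y ∉ M.verts := hy.2
  have hxb : x ≠ b := fun h => hxM (h ▸ hbM)
  have hya : y ≠ a := fun h => hyM (h ▸ haM)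
  have hxa' : x ≠ a := hxa.ne
  have hyb' : y ≠ b := hyb.ne
  have hab : a ≠ b := hMab.ne
  -- build the bigger matching
  set M1 : G.Subgraph := M.deleteVerts {a, b} ⊔ G.subgraphOfAdj hxa with hM1
  have hM1match : M1.IsMatching := by
    apply (matching_deleteVerts_pair hM hMab).sup
      (SimpleGraph.Subgraph.IsMatching.subgraphOfAdj hxa)
    rw [(matching_deleteVerts_pair hM hMab).support_eq_verts,
      SimpleGraph.support_subgraphOfAdj, SimpleGraph.Subgraph.deleteVerts_verts]
    rw [Set.disjoint_right]
    rintro v (rfl | rfl)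
    · exact fun h => hxM h.1
    · exact fun h => h.2 (Or.inl rfl)
  have hM1verts : M1.verts = (M.verts \ {a, b}) ∪ {x, a} := by
    rw [hM1, SimpleGraph.Subgraph.verts_sup, SimpleGraph.Subgraph.deleteVerts_verts,
      SimpleGraph.subgraphOfAdj_verts]
  set M2 : G.Subgraph := M1 ⊔ G.subgraphOfAdj hyb with hM2
  have hM2match : M2.IsMatching := by
    apply hM1match.sup (SimpleGraph.Subgraph.IsMatching.subgraphOfAdj hyb)
    rw [hM1match.support_eq_verts, SimpleGraph.support_subgraphOfAdj, hM1verts]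
    rw [Set.disjoint_right]
    rintro v (rfl | rfl)
    · rintro (h | (rfl | rfl))
      · exact hyM h.1
      · exact hxy rfl
      · exact hya rfl
    · rintro (h | (rfl | rfl))
      · exact h.2 (Or.inr rfl)
      · exact hxb rfl
      · exact hab rfl
  have hM2verts : M2.verts = M.verts ∪ {x, y} := by
    rw [hM2, SimpleGraph.Subgraph.verts_sup, SimpleGraph.subgraphOfAdj_verts, hM1verts]
    ext v
    simp only [Set.mem_union, Set.mem_diff, Set.mem_insert_iff, Set.mem_singleton_iff]
    constructor
    · rintro ((⟨h, _⟩ | (rfl | rfl)) | (rfl | rfl))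
      exacts [Or.inl h, Or.inr (Or.inl rfl), Or.inl haM, Or.inr (Or.inr rfl), Or.inl hbM]
    · rintro (h | (rfl | rfl))
      · by_cases hva : v = a
        · exact Or.inl (Or.inr (Or.inr hva))
        · by_cases hvb : v = b
          · exact Or.inr (Or.inr hvb)
          · exact Or.inl (Or.inl ⟨h, by tauto⟩)
      · exact Or.inl (Or.inr (Or.inl rfl))
      · exact Or.inr (Or.inl rfl)
  have hM2sub : M2.verts ⊆ s := by
    rw [hM2verts]
    apply Set.union_subset hMs
    rintro v (rfl | rfl) <;> [exact hx.1; exact hy.1]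
  have := hmax M2 hM2match hM2sub
  rw [hM2verts, Set.ncard_union_eq (by
      rw [Set.disjoint_right]; rintro v (rfl | rfl); exacts [hxM, hyM])
    (M.verts.toFinite) (Set.toFinite _), Set.ncard_pair hxy] at this
  omega

end Aux

/-- Plummer's lemma: a connected graph of even order `n` with minimum degree strictly
greater than `n/2` is bi-critical. -/
theorem stmt8 {V : Type*} [Fintype V] [Nonempty V]
    (G : SimpleGraph V) [DecidableRel G.Adj]
    (hconn : G.Connected) (hn : Even (Fintype.card V))
    (hmin : Fintype.card V < 2 * G.minDegree) :
    ∀ u v : V, u ≠ v →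
      ∃ M : G.Subgraph, M.verts = ({u, v} : Set V)ᶜ ∧ M.IsMatching := by
  classical
  intro u v huv
  set s : Set V := ({u, v} : Set V)ᶜ with hs
  have hcards : s.ncard + 2 = Fintype.card V := by
    have := Set.ncard_add_ncard_compl s
    rw [compl_compl, Set.ncard_pair huv, Nat.card_eq_fintype_card] at this
    omega
  have hcardeven : (Fintype.card V) % 2 = 0 := Nat.even_iff.mp hn
  have hdegncard : ∀ w : V, (G.neighborSet w).ncard = G.degree w := by
    intro w
    rw [Set.ncard_eq_toFinset_card']
    simp [SimpleGraph.degree, SimpleGraph.neighborFinset]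
  obtain ⟨M, hMv, hMm⟩ := key_matching G s
    (by rcases hn with ⟨k, hk⟩; exact ⟨k - 1, by omega⟩)
    (by
      intro w hw
      have h1 : G.minDegree ≤ G.degree w := G.minDegree_le_degree w
      have h2 : G.degree w ≤ (G.neighborSet w ∩ s).ncard + 2 := by
        have hsub : G.neighborSet w ⊆ (G.neighborSet w ∩ s) ∪ {u, v} := by
          intro z hz
          by_cases hzs : z ∈ s
          · exact Or.inl ⟨hz, hzs⟩
          · rw [hs, Set.mem_compl_iff, not_not] at hzs
            exact Or.inr hzs
        have := (Set.ncard_le_ncard hsub (Set.toFinite _)).trans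
          (Set.ncard_union_le _ _)
        rw [hdegncard w] at this
        have hpair : ({u, v} : Set V).ncard = 2 := Set.ncard_pair huv
        omega
      omega)
  exact ⟨M, hMv, hMm⟩
end

section
/- Let H be a graph with minimum degree at least D, and let S be a vertex subset of size s such that H − S has q components each of order c_i. If every component order satisfies 1 ≤ c_i ≤ D, then each component sends at least D edges to S; consequently, if moreover every vertex of H has degree at most D + 1 and q ≥ s + 2, then D·(s+2) ≤ (D+1)·s, i.e., s ≥ 2D. -/
lemma aux12 (c D T : ℕ) (h1 : 1 ≤ c) (h2 : c ≤ D) (h3 : c * (D+1) ≤ T + c*c) : D ≤ T := by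
  zify at *
  nlinarith [mul_nonneg (by linarith : (0:ℤ) ≤ (c:ℤ)-1) (by linarith : (0:ℤ) ≤ (D:ℤ)-(c:ℤ))]

/-- If `H` is a `{D, D+1}`-graph, `S` a vertex set such that `H − S` has components
`C₁, …, C_q`, each of order between `1` and `D`, then each component sends at least `D`
edges to `S`; if moreover `q ≥ s + 2` then `D(s+2) ≤ (D+1)s`, i.e. `s ≥ 2D`. -/
theorem stmt12 {V : Type*} [Fintype V] (H : SimpleGraph V) (D : ℕ)
    (hdeg : ∀ v : V, D ≤ (H.neighborSet v).ncard ∧ (H.neighborSet v).ncard ≤ D + 1)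
    (S : Finset V) (q : ℕ) (C : Fin q → Set V)
    (hdisj : ∀ i j, i ≠ j → Disjoint (C i) (C j))
    (hcover : (⋃ i, C i) = ((S : Set V))ᶜ)
    (hne : ∀ i, (C i).Nonempty)
    (hconn : ∀ i, (H.induce (C i)).Connected)
    (hnocross : ∀ i j, i ≠ j → ∀ u ∈ C i, ∀ w ∈ C j, ¬ H.Adj u w)
    (hsize : ∀ i, (C i).ncard ≤ D)
    (hq : S.card + 2 ≤ q) :
    (∀ i, D ≤ {e ∈ H.edgeSet | ∃ v ∈ C i, ∃ w ∈ (S : Set V), e = s(v, w)}.ncard) ∧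
    D * (S.card + 2) ≤ (D + 1) * S.card ∧ 2 * D ≤ S.card := by
  classical
  have hCfin : ∀ i, (C i).Finite := fun i => Set.toFinite _
  set CiF : Fin q → Finset V := fun i => (hCfin i).toFinset with hCiFdef
  have hmemCiF : ∀ i v, v ∈ CiF i ↔ v ∈ C i := fun i v => (hCfin i).mem_toFinset
  have hCS : ∀ i, ∀ v ∈ C i, v ∉ S := by
    intro i v hv hvS
    have h1 : v ∈ (⋃ j, C j) := Set.mem_iUnion.2 ⟨i, hv⟩
    rw [hcover] at h1; exact h1 hvS
  set P : Fin q → Finset (V × V) := fun i => ((CiF i) ×ˢ S).filter (fun p => H.Adj p.1 p.2)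
    with hPdef
  -- card of P i as a sum
  have hPcard : ∀ i, (P i).card = ∑ v ∈ CiF i, (S.filter (fun w => H.Adj v w)).card := by
    intro i
    rw [hPdef]
    simp only [Finset.card_filter, Finset.sum_product]
  -- per-vertex bound
  have hvert : ∀ i, ∀ v ∈ C i,
      D + 1 ≤ (S.filter (fun w => H.Adj v w)).card + (CiF i).card := by
    intro i v hv
    have hsub : H.neighborFinset v ⊆ (S.filter (fun w => H.Adj v w)) ∪ (CiF i).erase v := by
      intro w hw
      rw [SimpleGraph.mem_neighborFinset] at hw
      by_cases hwS : w ∈ S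
      · exact Finset.mem_union_left _ (Finset.mem_filter.2 ⟨hwS, hw⟩)
      · have hwc : w ∈ (⋃ j, C j) := by rw [hcover]; simpa using hwS
        obtain ⟨j, hj⟩ := Set.mem_iUnion.1 hwc
        by_cases hij : j = i
        · subst hij
          refine Finset.mem_union_right _ (Finset.mem_erase.2 ⟨?_, (hmemCiF _ _).2 hj⟩)
          rintro rfl; exact H.irrefl hw
        · exact absurd hw (hnocross i j (fun h => hij h.symm) v hv w hj)
    have hd : D ≤ (H.neighborFinset v).card := by
      have := (hdeg v).1
      rwa [Set.ncard_eq_toFinset_card'] at this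
    have hle := Finset.card_le_card hsub
    have hun := Finset.card_union_le (S.filter (fun w => H.Adj v w)) ((CiF i).erase v)
    have hvmem : v ∈ CiF i := (hmemCiF _ _).2 hv
    have herase : ((CiF i).erase v).card = (CiF i).card - 1 := Finset.card_erase_of_mem hvmem
    have hpos : 1 ≤ (CiF i).card := Finset.card_pos.2 ⟨v, hvmem⟩
    omega
  have hcard_eq : ∀ i, (CiF i).card = (C i).ncard := by
    intro i; rw [Set.ncard_eq_toFinset_card _ (hCfin i)]
  have hc1 : ∀ i, 1 ≤ (CiF i).card := by
    intro i
    obtain ⟨v, hv⟩ := hne i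
    exact Finset.card_pos.2 ⟨v, (hmemCiF _ _).2 hv⟩
  have hcD : ∀ i, (CiF i).card ≤ D := fun i => (hcard_eq i) ▸ hsize i
  -- D ≤ (P i).card
  have hPD : ∀ i, D ≤ (P i).card := by
    intro i
    have hsum : (CiF i).card * (D + 1) ≤ (P i).card + (CiF i).card * (CiF i).card := by
      rw [hPcard]
      calc (CiF i).card * (D + 1) = ∑ _v ∈ CiF i, (D + 1) := by
            rw [Finset.sum_const, smul_eq_mul]
        _ ≤ ∑ v ∈ CiF i, ((S.filter (fun w => H.Adj v w)).card + (CiF i).card) := by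
            apply Finset.sum_le_sum
            intro v hv
            exact hvert i v ((hmemCiF _ _).1 hv)
        _ = (∑ v ∈ CiF i, (S.filter (fun w => H.Adj v w)).card) + (CiF i).card * (CiF i).card := by
            rw [Finset.sum_add_distrib, Finset.sum_const, smul_eq_mul]
    exact aux12 _ _ _ (hc1 i) (hcD i) hsum
  -- first conclusion : edge sets
  have hEset : ∀ i, {e ∈ H.edgeSet | ∃ v ∈ C i, ∃ w ∈ (S : Set V), e = s(v, w)}
      = ↑((P i).image (fun p => s(p.1, p.2))) := by
    intro i
    ext e
    simp only [Set.mem_setOf_eq, Finset.coe_image, Set.mem_image, Finset.mem_coe,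
      Finset.mem_filter, Finset.mem_product, hPdef, hmemCiF]
    constructor
    · rintro ⟨he, v, hv, w, hw, rfl⟩
      exact ⟨(v, w), ⟨⟨hv, hw⟩, by simpa using he⟩, rfl⟩
    · rintro ⟨⟨v, w⟩, ⟨⟨hv, hw⟩, hadj⟩, rfl⟩
      exact ⟨hadj, v, hv, w, hw, rfl⟩
  have hinj : ∀ i, Set.InjOn (fun p : V × V => s(p.1, p.2)) ↑(P i) := by
    intro i p hp p' hp' h
    simp only [hPdef, Finset.coe_filter, Finset.mem_coe, Finset.mem_product,
      Set.mem_setOf_eq] at hp hp'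
    have h2 := Sym2.eq_iff.1 h
    rcases h2 with ⟨h3, h4⟩ | ⟨h3, h4⟩
    · exact Prod.ext h3 h4
    · exfalso
      exact hCS i p.1 ((hmemCiF i p.1).1 hp.1.1) (h3 ▸ hp'.1.2)
  have hfirst : ∀ i, D ≤ {e ∈ H.edgeSet | ∃ v ∈ C i, ∃ w ∈ (S : Set V), e = s(v, w)}.ncard := by
    intro i
    rw [hEset i, Set.ncard_coe_finset, Finset.card_image_of_injOn (hinj i)]
    exact hPD i
  have hsecond : D * (S.card + 2) ≤ (D + 1) * S.card := by
    have hdisjP : ∀ i ∈ (Finset.univ : Finset (Fin q)), ∀ j ∈ Finset.univ, i ≠ j →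
        Disjoint (P i) (P j) := by
      intro i _ j _ hij
      rw [Finset.disjoint_left]
      intro p hpi hpj
      simp only [hPdef, Finset.mem_filter, Finset.mem_product, hmemCiF] at hpi hpj
      exact Set.disjoint_left.1 (hdisj i j hij) hpi.1.1 hpj.1.1
    have hbi : ∑ i, (P i).card = (Finset.univ.biUnion P).card :=
      (Finset.card_biUnion hdisjP).symm
    have hQsub : Finset.univ.biUnion P ⊆
        (Finset.univ ×ˢ S).filter (fun p => H.Adj p.1 p.2) := by
      intro p hp
      obtain ⟨i, _, hpi⟩ := Finset.mem_biUnion.1 hp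
      simp only [hPdef, Finset.mem_filter, Finset.mem_product] at hpi ⊢
      exact ⟨⟨Finset.mem_univ _, hpi.1.2⟩, hpi.2⟩
    have hQcard : ((Finset.univ ×ˢ S).filter (fun p : V × V => H.Adj p.1 p.2)).card
        = ∑ w ∈ S, (Finset.univ.filter (fun v => H.Adj v w)).card := by
      simp only [Finset.card_filter, Finset.sum_product]
      rw [Finset.sum_comm]
    have hQle : ∑ w ∈ S, (Finset.univ.filter (fun v => H.Adj v w)).card ≤ S.card * (D + 1) := by
      calc ∑ w ∈ S, (Finset.univ.filter (fun v => H.Adj v w)).card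
          ≤ ∑ _w ∈ S, (D + 1) := by
            apply Finset.sum_le_sum
            intro w _
            have h1 : (Finset.univ.filter (fun v => H.Adj v w)) = H.neighborFinset w := by
              ext v; simp [SimpleGraph.adj_comm]
            rw [h1]
            have h2 := (hdeg w).2
            rwa [Set.ncard_eq_toFinset_card'] at h2
        _ = S.card * (D + 1) := by rw [Finset.sum_const, smul_eq_mul]
    calc D * (S.card + 2) ≤ D * q := Nat.mul_le_mul_left _ hq
      _ = ∑ _i : Fin q, D := by simp [Finset.sum_const, mul_comm]
      _ ≤ ∑ i, (P i).card := Finset.sum_le_sum (fun i _ => hPD i)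
      _ = (Finset.univ.biUnion P).card := hbi
      _ ≤ ((Finset.univ ×ˢ S).filter (fun p : V × V => H.Adj p.1 p.2)).card :=
          Finset.card_le_card hQsub
      _ = ∑ w ∈ S, (Finset.univ.filter (fun v => H.Adj v w)).card := hQcard
      _ ≤ S.card * (D + 1) := hQle
      _ = (D + 1) * S.card := mul_comm _ _
  exact ⟨hfirst, hsecond, by nlinarith [hsecond]⟩
end

section
/- For every even integer n there exists a (D_n − 1)-regular graph of order n with no perfect matching, where D_n = 2⌈n/4⌉ − 1. Specifically: if n/2 is odd, the disjoint union of two complete graphs K_{n/2} is (n/2 − 1)-regular and has no perfect matching; if n/2 is even, the graph obtained from the disjoint union of K_{n/2−1} and K_{n/2+1} by deleting a Hamiltonian cycle from K_{n/2+1} is (n/2 − 2)-regular and has no perfect matching. -/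
lemma auxNoPM {V : Type*} [Fintype V] (G : SimpleGraph V) (P : Set V)
    (hP : ∀ v w, G.Adj v w → (v ∈ P ↔ w ∈ P)) (hodd : Odd P.ncard) :
    ¬ ∃ M : G.Subgraph, M.IsPerfectMatching := by
  classical
  rintro ⟨M, hM⟩
  have hm : (M.induce P).IsMatching := by
    intro v hv
    simp only [SimpleGraph.Subgraph.induce_verts] at hv
    obtain ⟨w, hw, hu⟩ := hM.1 (hM.2 v)
    exact ⟨w, ⟨hv, (hP v w (M.adj_sub hw)).mp hv, hw⟩, fun y hy => hu y hy.2.2⟩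
  have he := hm.even_card
  rw [Set.ncard_eq_toFinset_card'] at hodd
  apply Nat.not_even_iff_odd.2 hodd
  convert he using 2
  ext x; simp

open Finset in
lemma finFilterCard (n : ℕ) (p : ℕ → Prop) [DecidablePred p] :
    (Finset.univ.filter (fun w : Fin n => p w.val)).card
      = ((Finset.range n).filter p).card := by
  rw [← Finset.card_image_of_injective _ Fin.val_injective]
  congr 1
  ext x
  simp only [Finset.mem_image, Finset.mem_filter, Finset.mem_univ, true_and, Finset.mem_range]
  constructor
  · rintro ⟨w, hw, rfl⟩; exact ⟨w.isLt, hw⟩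
  · rintro ⟨hx, hp⟩; exact ⟨⟨x, hx⟩, hp, rfl⟩

lemma ncardFilter (n : ℕ) (p : ℕ → Prop) [DecidablePred p] (s : Set (Fin n))
    (hs : ∀ w, w ∈ s ↔ p w.val) : s.ncard = ((Finset.range n).filter p).card := by
  classical
  have h : s = {w : Fin n | p w.val} := Set.ext hs
  rw [h, Set.ncard_eq_toFinset_card', Set.toFinset_setOf, finFilterCard]

lemma cnt1 (n a x : ℕ) (han : a ≤ n) (hx : x < a) :
    ((Finset.range n).filter (fun w => w < a ∧ w ≠ x)).card = a - 1 := by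
  have h : (Finset.range n).filter (fun w => w < a ∧ w ≠ x) = (Finset.range a).erase x := by
    ext w; simp only [Finset.mem_filter, Finset.mem_range, Finset.mem_erase]; omega
  rw [h, Finset.card_erase_of_mem (by simp [hx]), Finset.card_range]

lemma cnt2 (n a x : ℕ) (hax : a ≤ x) (hxn : x < n) :
    ((Finset.range n).filter (fun w => a ≤ w ∧ w ≠ x)).card = n - a - 1 := by
  have h : (Finset.range n).filter (fun w => a ≤ w ∧ w ≠ x) = (Finset.Ico a n).erase x := by
    ext w; simp only [Finset.mem_filter, Finset.mem_range, Finset.mem_erase, Finset.mem_Ico]; omega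
  rw [h, Finset.card_erase_of_mem (by simp [Finset.mem_Ico]; omega), Nat.card_Ico]

lemma cnt3 (n a x y z : ℕ) (hax : a ≤ x) (hay : a ≤ y) (haz : a ≤ z)
    (hxn : x < n) (hyn : y < n) (hzn : z < n)
    (hxy : x ≠ y) (hxz : x ≠ z) (hyz : y ≠ z) :
    ((Finset.range n).filter (fun w => a ≤ w ∧ w ≠ x ∧ w ≠ y ∧ w ≠ z)).card = n - a - 3 := by
  have h : (Finset.range n).filter (fun w => a ≤ w ∧ w ≠ x ∧ w ≠ y ∧ w ≠ z)
      = (((Finset.Ico a n).erase x).erase y).erase z := by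
    ext w
    simp only [Finset.mem_filter, Finset.mem_range, Finset.mem_erase, Finset.mem_Ico]; omega
  rw [h, Finset.card_erase_of_mem (by simp only [Finset.mem_erase, Finset.mem_Ico]; omega),
    Finset.card_erase_of_mem (by simp only [Finset.mem_erase, Finset.mem_Ico]; omega),
    Finset.card_erase_of_mem (by simp only [Finset.mem_erase, Finset.mem_Ico]; omega),
    Nat.card_Ico]
  omega

lemma ncardLt (n c : ℕ) (h : c ≤ n) : ({v : Fin n | v.val < c} : Set (Fin n)).ncard = c := by
  rw [ncardFilter n (fun w => w < c) {v : Fin n | v.val < c} (fun w => Iff.rfl)]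
  have : (Finset.range n).filter (fun w => w < c) = Finset.range c := by
    ext w; simp only [Finset.mem_filter, Finset.mem_range]; omega
  rw [this, Finset.card_range]

set_option maxHeartbeats 1600000 in
/-- For every even `n ≥ 6` there is a `(Dₙ − 1)`-regular graph of order `n` with no
perfect matching, where `Dₙ = 2⌈n/4⌉ − 1`. -/
theorem stmt17 (n : ℕ) (hn : Even n) (h6 : 6 ≤ n) :
    ∃ G : SimpleGraph (Fin n),
      (∀ v, (G.neighborSet v).ncard = 2 * ((n + 3) / 4) - 1 - 1) ∧
      ¬ ∃ M : G.Subgraph, M.IsPerfectMatching := by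
  classical
  rw [Nat.even_iff] at hn
  set h := n / 2 with hh
  have h4 : n % 4 = 0 ∨ n % 4 = 2 := by omega
  rcases h4 with h4 | h4
  · -- n ≡ 0 mod 4 : K_{h-1} ⊔ (K_{h+1} minus Hamiltonian cycle)
    set a := h - 1 with ha
    have hcases : n ≥ 8 ∧ a + 1 = h ∧ 2 * h = n := by omega
    set G : SimpleGraph (Fin n) := ⟨fun v w => v.val ≠ w.val ∧ (v.val < a ↔ w.val < a) ∧
        (v.val < a ∨ ¬ (v.val + 1 = w.val ∨ w.val + 1 = v.val ∨
          (v.val = a ∧ w.val = n - 1) ∨ (w.val = a ∧ v.val = n - 1))),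
        ⟨fun v w hvw => by omega⟩, ⟨fun v hv => by omega⟩⟩ with hG
    refine ⟨G, ?_, ?_⟩
    · intro v
      rw [ncardFilter n (fun w => v.val ≠ w ∧ (v.val < a ↔ w < a) ∧
        (v.val < a ∨ ¬ (v.val + 1 = w ∨ w + 1 = v.val ∨
          (v.val = a ∧ w = n - 1) ∨ (w = a ∧ v.val = n - 1)))) (G.neighborSet v) (fun w => Iff.rfl)]
      by_cases hv : v.val < a
      · have : ((Finset.range n).filter (fun w => v.val ≠ w ∧ (v.val < a ↔ w < a) ∧
            (v.val < a ∨ ¬ (v.val + 1 = w ∨ w + 1 = v.val ∨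
              (v.val = a ∧ w = n - 1) ∨ (w = a ∧ v.val = n - 1)))))
            = ((Finset.range n).filter (fun w => w < a ∧ w ≠ v.val)) := by
          apply Finset.filter_congr; intro w hw; simp only [Finset.mem_range] at hw
          constructor <;> intro <;> omega
        rw [this, cnt1 n a v.val (by omega) hv]; omega
      · -- big side: cycle neighbors
        have hvn : v.val < n := v.isLt
        rcases (by omega : v.val = a ∨ v.val = n - 1 ∨ (a < v.val ∧ v.val < n - 1)) with hc | hc | hc
        · have : ((Finset.range n).filter (fun w => v.val ≠ w ∧ (v.val < a ↔ w < a) ∧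
              (v.val < a ∨ ¬ (v.val + 1 = w ∨ w + 1 = v.val ∨
                (v.val = a ∧ w = n - 1) ∨ (w = a ∧ v.val = n - 1)))))
              = ((Finset.range n).filter (fun w => a ≤ w ∧ w ≠ v.val ∧ w ≠ a + 1 ∧ w ≠ n - 1)) := by
            apply Finset.filter_congr; intro w hw; simp only [Finset.mem_range] at hw
            constructor <;> intro <;> omega
          rw [this, cnt3 n a v.val (a+1) (n-1) (by omega) (by omega) (by omega)
            (by omega) (by omega) (by omega) (by omega) (by omega) (by omega)]; omega
        · have : ((Finset.range n).filter (fun w => v.val ≠ w ∧ (v.val < a ↔ w < a) ∧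
              (v.val < a ∨ ¬ (v.val + 1 = w ∨ w + 1 = v.val ∨
                (v.val = a ∧ w = n - 1) ∨ (w = a ∧ v.val = n - 1)))))
              = ((Finset.range n).filter (fun w => a ≤ w ∧ w ≠ v.val ∧ w ≠ n - 2 ∧ w ≠ a)) := by
            apply Finset.filter_congr; intro w hw; simp only [Finset.mem_range] at hw
            constructor <;> intro <;> omega
          rw [this, cnt3 n a v.val (n-2) a (by omega) (by omega) (by omega)
            (by omega) (by omega) (by omega) (by omega) (by omega) (by omega)]; omega
        · have : ((Finset.range n).filter (fun w => v.val ≠ w ∧ (v.val < a ↔ w < a) ∧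
              (v.val < a ∨ ¬ (v.val + 1 = w ∨ w + 1 = v.val ∨
                (v.val = a ∧ w = n - 1) ∨ (w = a ∧ v.val = n - 1)))))
              = ((Finset.range n).filter (fun w => a ≤ w ∧ w ≠ v.val ∧ w ≠ v.val + 1 ∧ w ≠ v.val - 1)) := by
            apply Finset.filter_congr; intro w hw; simp only [Finset.mem_range] at hw
            constructor <;> intro <;> omega
          rw [this, cnt3 n a v.val (v.val+1) (v.val-1) (by omega) (by omega) (by omega)
            (by omega) (by omega) (by omega) (by omega) (by omega) (by omega)]; omega
    · apply auxNoPM _ {v : Fin n | v.val < a}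
      · intro v w hvw
        simp only [Set.mem_setOf_eq]
        exact hvw.2.1
      · rw [ncardLt n a (by omega)]
        refine ⟨h / 2 - 1, by omega⟩
  · -- n ≡ 2 mod 4 : K_h ⊔ K_h with h odd
    set G : SimpleGraph (Fin n) := ⟨fun v w => v.val ≠ w.val ∧ (v.val < h ↔ w.val < h),
        ⟨fun v w hvw => by omega⟩, ⟨fun v hv => by omega⟩⟩ with hG
    refine ⟨G, ?_, ?_⟩
    · intro v
      rw [ncardFilter n (fun w => v.val ≠ w ∧ (v.val < h ↔ w < h)) (G.neighborSet v) (fun w => Iff.rfl)]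
      by_cases hv : v.val < h
      · have : ((Finset.range n).filter (fun w => v.val ≠ w ∧ (v.val < h ↔ w < h)))
            = ((Finset.range n).filter (fun w => w < h ∧ w ≠ v.val)) := by
          apply Finset.filter_congr; intro w hw; simp only [Finset.mem_range] at hw
          constructor <;> intro <;> omega
        rw [this, cnt1 n h v.val (by omega) hv]; omega
      · have : ((Finset.range n).filter (fun w => v.val ≠ w ∧ (v.val < h ↔ w < h)))
            = ((Finset.range n).filter (fun w => h ≤ w ∧ w ≠ v.val)) := by
          apply Finset.filter_congr; intro w hw; simp only [Finset.mem_range] at hw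
          constructor <;> intro <;> omega
        rw [this, cnt2 n h v.val (by omega) v.isLt]; omega
    · apply auxNoPM _ {v : Fin n | v.val < h}
      · intro v w hvw
        simp only [Set.mem_setOf_eq]
        exact hvw.2
      · rw [ncardLt n h (by omega)]
        refine ⟨h / 2, by omega⟩
end
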